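/- arXiv:2507.05022 — 13 statements merged into one kernel-verified Lean document; each statement's English description precedes it below -/
import Mathlib

section
/- Let (σ,δ) be a left skew derivation of a ring A and suppose Σ = {1, X, X^2, ...} is a left denominator set (left Ore set) in the skew polynomial ring A[X;σ,δ]. Then δ is locally nilpotent: for every a ∈ A there is k ∈ ℕ with δ^k(a) = 0. -/
/-- Let `(σ, δ)` be a left skew derivation of a ring `A` and suppose
`Σ = {1, X, X², …}` is a left denominator set (left permutable and left
reversible) in the skew polynomial ring `A[X;σ,δ]` (modeled as a ring `R` with
`ι : A →+* R`, `X : R`, relation `X·a = σ(a)·X + δ(a)` and `{X^i}` a left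
`A`-basis).  Then `δ` is locally nilpotent: for every `a ∈ A` there is `k ∈ ℕ`
with `δ^k(a) = 0`. -/
theorem stmt3 {A R : Type*} [Ring A] [Ring R]
    (σ : A →+* A) (δ : A →+ A)
    (hleib : ∀ a b : A, δ (a * b) = σ a * δ b + δ a * b)
    (ι : A →+* R) (X : R)
    (hcomm : ∀ a : A, X * ι a = ι (σ a) * X + ι (δ a))
    (hbasis : ∀ f : R, ∃! c : ℕ →₀ A, f = c.sum fun i a => ι a * X ^ i)
    (hperm : ∀ (f : R) (m : ℕ), ∃ (g : R) (n : ℕ), X ^ n * f = g * X ^ m)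
    (hrev : ∀ (f : R) (n : ℕ), f * X ^ n = 0 → ∃ k : ℕ, X ^ k * f = 0) :
    ∀ a : A, ∃ k : ℕ, (⇑δ)^[k] a = 0 := by
  -- If ι b is a multiple of X, then b = 0 (constant coefficient vanishes).
  have key0 : ∀ (b : A) (h : R), ι b = h * X → b = 0 := by
    intro b h hb
    obtain ⟨c, hc, -⟩ := hbasis h
    have succEmb : ℕ ↪ ℕ := ⟨Nat.succ, Nat.succ_injective⟩
    have hbX : ι b = (c.embDomain ⟨Nat.succ, Nat.succ_injective⟩).sum
        fun i a => ι a * X ^ i := by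
      rw [hb, hc, Finsupp.sum_mul, Finsupp.sum_embDomain]
      refine Finsupp.sum_congr fun i _ => ?_
      simp [pow_succ, mul_assoc]
    have hsingle : ι b = (Finsupp.single 0 b).sum fun i a => ι a * X ^ i := by
      rw [Finsupp.sum_single_index] <;> simp
    obtain ⟨c', -, huniq⟩ := hbasis (ι b)
    have h1 := huniq _ hsingle
    have h2 := huniq _ hbX
    have : Finsupp.single 0 b = c.embDomain ⟨Nat.succ, Nat.succ_injective⟩ :=
      h1.trans h2.symm
    have h0 := congrArg (fun v : ℕ →₀ A => v 0) this
    simp only [Finsupp.single_eq_same] at h0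
    rw [h0, Finsupp.embDomain_notin_range]
    rintro ⟨i, hi⟩
    exact Nat.succ_ne_zero i hi
  -- X^n * ι a = g * X + ι (δ^[n] a) for some g.
  have key : ∀ (n : ℕ) (a : A), ∃ g : R, X ^ n * ι a = g * X + ι ((⇑δ)^[n] a) := by
    intro n
    induction n with
    | zero => intro a; exact ⟨0, by simp⟩
    | succ n ih =>
      intro a
      obtain ⟨g, hg⟩ := ih a
      refine ⟨X * g + ι (σ ((⇑δ)^[n] a)), ?_⟩
      calc X ^ (n + 1) * ι a = X * (X ^ n * ι a) := by rw [pow_succ', mul_assoc]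
        _ = X * (g * X + ι ((⇑δ)^[n] a)) := by rw [hg]
        _ = X * g * X + (ι (σ ((⇑δ)^[n] a)) * X + ι (δ ((⇑δ)^[n] a))) := by
            rw [mul_add, hcomm, mul_assoc]
        _ = (X * g + ι (σ ((⇑δ)^[n] a))) * X + ι ((⇑δ)^[n + 1] a) := by
            rw [add_mul, Function.iterate_succ_apply', add_assoc]
  intro a
  obtain ⟨g, n, hgn⟩ := hperm (ι a) 1
  obtain ⟨g', hg'⟩ := key n a
  refine ⟨n, key0 _ (g - g') ?_⟩
  have : g * X = g' * X + ι ((⇑δ)^[n] a) := by rw [← pow_one X, ← hgn, hg', pow_one]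
  rw [sub_mul, this]
  abel
end

section
/- Let (σ,δ) be a left skew derivation of a ring A with δ locally nilpotent. Then Σ = {1, X, X^2, ...} is a left denominator set of A[X;σ,δ]: for every f ∈ A[X;σ,δ] there exist n ∈ ℕ and g ∈ A[X;σ,δ] with X^n f = g X, and Σ is left reversible. -/
/-!
Iterating `X a = σ(a) X + δ(a)` gives `X^k a ∈ R X + δ^k(a)`, so local nilpotence of `δ` puts
`X^k a` into the left ideal `R X` for `k` large; since `{f | ∃ n, X^n f ∈ R X}` is closed under
sums, it is all of `R`. Left reversibility holds because `X` is right regular: multiplying by `X`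
on the right shifts the coordinates in the basis `{X^i}`, which is injective.
-/

theorem exists_pow_mul_mem_of_add {R : Type*} [Semiring R] {I : Ideal R} {x f g : R}
    (hf : ∃ n, x ^ n * f ∈ I) (hg : ∃ n, x ^ n * g ∈ I) : ∃ n, x ^ n * (f + g) ∈ I := by
  obtain ⟨m, hm⟩ := hf
  obtain ⟨n, hn⟩ := hg
  refine ⟨m + n, ?_⟩
  rw [mul_add]
  refine I.add_mem ?_ ?_
  · rw [add_comm, pow_add, mul_assoc]
    exact I.mul_mem_left _ hm
  · rw [pow_add, mul_assoc]
    exact I.mul_mem_left _ hn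

theorem exists_pow_mul_sum_mem {R ι : Type*} [Semiring R] {I : Ideal R} {x : R} {s : Finset ι}
    {f : ι → R} (h : ∀ i ∈ s, ∃ n, x ^ n * f i ∈ I) : ∃ n, x ^ n * ∑ i ∈ s, f i ∈ I :=
  Finset.sum_induction f (fun g ↦ ∃ n, x ^ n * g ∈ I)
    (fun _ _ ↦ exists_pow_mul_mem_of_add) ⟨0, by simp⟩ h

section SkewCommutation

variable {A R : Type*} [Semiring R] {σ δ : A → A} {X : R}

theorem exists_pow_mul_eq_mul_add_iterate {ι : A → R}
    (hcomm : ∀ a, X * ι a = ι (σ a) * X + ι (δ a)) (k : ℕ) (a : A) :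
    ∃ g, X ^ k * ι a = g * X + ι (δ^[k] a) := by
  induction k with
  | zero => exact ⟨0, by simp⟩
  | succ k ih =>
    obtain ⟨g, hg⟩ := ih
    refine ⟨X * g + ι (σ (δ^[k] a)), ?_⟩
    rw [pow_succ', mul_assoc, hg, Function.iterate_succ_apply', mul_add, ← mul_assoc, hcomm,
      add_mul, add_assoc]

theorem exists_pow_mul_mem_span_X [Semiring A] {ι : A →+* R}
    (hcomm : ∀ a, X * ι a = ι (σ a) * X + ι (δ a)) (hln : ∀ a, ∃ k, δ^[k] a = 0)
    (c : ℕ →₀ A) : ∃ n, X ^ n * c.sum (fun i a ↦ ι a * X ^ i) ∈ Ideal.span {X} := by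
  refine exists_pow_mul_sum_mem fun i _ ↦ ?_
  obtain ⟨k, hk⟩ := hln (c i)
  obtain ⟨g, hg⟩ := exists_pow_mul_eq_mul_add_iterate hcomm k (c i)
  refine ⟨k, Ideal.mem_span_singleton'.mpr ⟨g * X ^ i, ?_⟩⟩
  rw [← mul_assoc, hg, hk, map_zero, add_zero, mul_assoc, mul_assoc, ← pow_succ, ← pow_succ']

end SkewCommutation

theorem sum_mul_X_eq_sum_mapDomain_succ {A R : Type*} [Semiring A] [Semiring R] {ι : A →+* R}
    {X : R} (c : ℕ →₀ A) :
    c.sum (fun i a ↦ ι a * X ^ i) * X = (c.mapDomain (· + 1)).sum (fun i a ↦ ι a * X ^ i) := by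
  rw [Finsupp.sum_mapDomain_index (fun _ ↦ by simp) (fun _ _ _ ↦ by rw [map_add, add_mul]),
    Finsupp.sum_mul]
  exact Finsupp.sum_congr fun i _ ↦ by rw [mul_assoc, ← pow_succ]

theorem isRightRegular_X_of_basis {A R : Type*} [Semiring A] [Ring R] {ι : A →+* R} {X : R}
    (hbasis : ∀ f : R, ∃! c : ℕ →₀ A, f = c.sum fun i a ↦ ι a * X ^ i) : IsRightRegular X := by
  refine isRightRegular_iff_left_eq_zero_of_mul.mpr fun f hf ↦ ?_
  obtain ⟨c, rfl, -⟩ := hbasis f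
  obtain ⟨c₀, -, huniq⟩ := hbasis 0
  have hzero : 0 = (c.mapDomain (· + 1)).sum fun i a ↦ ι a * X ^ i := by
    rw [← sum_mul_X_eq_sum_mapDomain_succ, hf]
  have hshift : c.mapDomain (· + 1) = 0 := by
    rw [huniq _ hzero, ← huniq 0 (by simp)]
  rw [Finsupp.mapDomain_injective (add_left_injective 1)
    (hshift.trans Finsupp.mapDomain_zero.symm), Finsupp.sum_zero_index]

theorem stmt4_general {A R : Type*} [Ring A] [Ring R]
    (σ : A →+* A) (δ : A →+ A)
    (ι : A →+* R) (X : R)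
    (hcomm : ∀ a : A, X * ι a = ι (σ a) * X + ι (δ a))
    (hbasis : ∀ f : R, ∃! c : ℕ →₀ A, f = c.sum fun i a => ι a * X ^ i)
    (hln : ∀ a : A, ∃ k : ℕ, (⇑δ)^[k] a = 0) :
    (∀ f : R, ∃ (n : ℕ) (g : R), X ^ n * f = g * X) ∧
    (∀ (f : R) (n : ℕ), f * X ^ n = 0 → ∃ k : ℕ, X ^ k * f = 0) := by
  refine ⟨fun f ↦ ?_, fun f n hfn ↦ ⟨0, ?_⟩⟩
  · obtain ⟨c, rfl, -⟩ := hbasis f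
    obtain ⟨n, hn⟩ := exists_pow_mul_mem_span_X hcomm hln c
    obtain ⟨g, hg⟩ := Ideal.mem_span_singleton'.mp hn
    exact ⟨n, g, hg.symm⟩
  · rw [pow_zero, one_mul]
    exact isRightRegular_iff_left_eq_zero_of_mul.mp
      ((isRightRegular_X_of_basis hbasis).pow n) f hfn

/-- Let `(σ, δ)` be a left skew derivation of a ring `A` with `δ` locally
nilpotent.  Then `Σ = {1, X, X², …}` is a left denominator set of `A[X;σ,δ]`
(modeled as a ring `R` with `ι : A →+* R`, `X : R`, the relation
`X·a = σ(a)·X + δ(a)` and `{X^i}` a left `A`-basis): for every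
`f ∈ A[X;σ,δ]` there exist `n ∈ ℕ` and `g` with `X^n·f = g·X`, and `Σ` is left
reversible. -/
theorem stmt4 {A R : Type*} [Ring A] [Ring R]
    (σ : A →+* A) (δ : A →+ A)
    (hleib : ∀ a b : A, δ (a * b) = σ a * δ b + δ a * b)
    (ι : A →+* R) (X : R)
    (hcomm : ∀ a : A, X * ι a = ι (σ a) * X + ι (δ a))
    (hbasis : ∀ f : R, ∃! c : ℕ →₀ A, f = c.sum fun i a => ι a * X ^ i)
    (hln : ∀ a : A, ∃ k : ℕ, (⇑δ)^[k] a = 0) :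
    (∀ f : R, ∃ (n : ℕ) (g : R), X ^ n * f = g * X) ∧
    (∀ (f : R) (n : ℕ), f * X ^ n = 0 → ∃ k : ℕ, X ^ k * f = 0) :=
  stmt4_general σ δ ι X hcomm hbasis hln
end

section
/- Let (σ,δ) be a left skew derivation of a ring A with σ an automorphism. Then Σ = {1, X, X^2, ...} is a right denominator set of A[X;σ,δ] if and only if δ' = -δσ^{-1} is locally nilpotent. -/
/-!
Every `f ∈ A[X;σ,δ]` can be written uniquely as `ι b + X * g`: existence comes from
`ι a * X = X * ι (σ⁻¹ a) + ι (δ' a)`, uniqueness from comparing the top coefficient of `X * g`,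
which is `σ` of the top coefficient of `g`. Multiplying on the right by `X` acts on the
"constant" `b` by `δ'`, so `f * X ^ n ∈ X * R` exactly when `δ'^[n] b = 0`; this is the Ore
condition for `m = 1`, and the general one follows by induction on `m`. Reversibility is
automatic because `X` is left regular.
-/

theorem Finsupp.eq_zero_of_map_add_map_succ_eq_zero {A : Type*} [AddCommGroup A]
    {σ δ : A →+ A} (hσ : Function.Injective σ) {c : ℕ →₀ A}
    (h : ∀ j, σ (c j) + δ (c (j + 1)) = 0) : c = 0 := by
  by_contra hc
  set N := c.support.max' (Finsupp.support_nonempty_iff.mpr hc)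
  have hN : c (N + 1) = 0 := Finsupp.notMem_support_iff.mp fun hmem => by
    have := c.support.le_max' _ hmem
    omega
  have hcN : c N = 0 := hσ (by simpa [hN] using h N)
  exact Finsupp.mem_support_iff.mp (c.support.max'_mem _) hcN

theorem exists_mul_pow_eq_pow_mul {M : Type*} [Monoid M] {x : M}
    (h : ∀ f : M, ∃ (g : M) (n : ℕ), f * x ^ n = x * g) (f : M) (m : ℕ) :
    ∃ (g : M) (n : ℕ), f * x ^ n = x ^ m * g := by
  induction m with
  | zero => exact ⟨f, 0, by simp⟩
  | succ m ih =>
    obtain ⟨g, n, hg⟩ := ih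
    obtain ⟨g', k, hg'⟩ := h g
    exact ⟨g', n + k, by rw [pow_add, ← mul_assoc, hg, mul_assoc, hg', pow_succ, mul_assoc]⟩

namespace SkewPolynomial

variable {A R : Type*} [Ring A] [Ring R] {σ : A ≃+* A} {δ : A →+ A} {ι : A →+* R} {X : R}

variable (ι X) in
noncomputable def skewEval : (ℕ →₀ A) →+ R :=
  Finsupp.liftAddHom fun i => (AddMonoidHom.mulRight (X ^ i)).comp ι.toAddMonoidHom

theorem skewEval_apply (c : ℕ →₀ A) : skewEval ι X c = c.sum fun i a => ι a * X ^ i :=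
  Finsupp.liftAddHom_apply _ _

theorem skewEval_single (i : ℕ) (a : A) : skewEval ι X (Finsupp.single i a) = ι a * X ^ i := by
  simp [skewEval]

section
variable (hcomm : ∀ a : A, X * ι a = ι (σ a) * X + ι (δ a))
include hcomm

theorem ι_mul_X (a : A) : ι a * X = X * ι (σ.symm a) + ι (-δ (σ.symm a)) := by
  rw [hcomm, σ.apply_symm_apply, map_neg]
  abel

theorem exists_ι_mul_X_pow (a : A) (n : ℕ) :
    ∃ h : R, ι a * X ^ n = ι ((fun b => -δ (σ.symm b))^[n] a) + X * h := by
  induction n with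
  | zero => exact ⟨0, by simp⟩
  | succ n ih =>
    obtain ⟨h, hh⟩ := ih
    refine ⟨ι (σ.symm ((fun b => -δ (σ.symm b))^[n] a)) + h * X, ?_⟩
    rw [pow_succ, ← mul_assoc, hh, add_mul, ι_mul_X hcomm, Function.iterate_succ_apply',
      mul_add, mul_assoc]
    abel

theorem X_mul_skewEval (c : ℕ →₀ A) :
    X * skewEval ι X c = skewEval ι X
      (Finsupp.mapDomain Nat.succ (c.mapRange σ (map_zero σ)) + c.mapRange δ (map_zero δ)) := by
  induction c using Finsupp.induction_linear with
  | zero => simp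
  | add c d hc hd =>
    rw [map_add, mul_add, hc, hd, ← map_add, Finsupp.mapRange_add', Finsupp.mapRange_add',
      Finsupp.mapDomain_add]
    congr 1
    abel
  | single i a =>
    simp [skewEval_single, ← mul_assoc, hcomm, add_mul, pow_succ']

theorem exists_eq_ι_add_X_mul (hsurj : Function.Surjective (skewEval ι X)) (f : R) :
    ∃ (b : A) (g : R), ι b + X * g = f := by
  let S : AddSubgroup R := ι.range.toAddSubgroup ⊔ (AddMonoidHom.mulLeft X).range
  suffices f ∈ S by
    obtain ⟨_, ⟨b, rfl⟩, _, ⟨g, rfl⟩, hf⟩ := AddSubgroup.mem_sup.mp this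
    exact ⟨b, g, hf⟩
  obtain ⟨c, rfl⟩ := hsurj f
  rw [skewEval_apply]
  refine AddSubgroup.sum_mem _ fun i _ => ?_
  obtain ⟨h, hh⟩ := exists_ι_mul_X_pow hcomm (c i) i
  dsimp only
  rw [hh]
  exact AddSubgroup.add_mem_sup ⟨_, rfl⟩ ⟨h, rfl⟩

theorem eq_zero_of_ι_add_X_mul_eq_zero (hE : Function.Bijective (skewEval ι X)) {b : A} {g : R}
    (h : ι b + X * g = 0) : b = 0 ∧ g = 0 := by
  obtain ⟨c, rfl⟩ := hE.2 g
  rw [X_mul_skewEval hcomm, ← mul_one (ι b), ← pow_zero X, ← skewEval_single, ← map_add,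
    ← map_zero (skewEval ι X)] at h
  have hd := hE.1 h
  have hc : c = 0 := Finsupp.eq_zero_of_map_add_map_succ_eq_zero (σ := σ.toAddMonoidHom) (δ := δ)
    σ.injective fun j => by
      simpa [Finsupp.mapDomain_apply Nat.succ_injective] using DFunLike.congr_fun hd j.succ
  subst hc
  simpa using hd

theorem isLeftRegular_X (hE : Function.Bijective (skewEval ι X)) : IsLeftRegular X :=
  isLeftRegular_iff_right_eq_zero_of_mul.mpr fun g hg =>
    (eq_zero_of_ι_add_X_mul_eq_zero hcomm hE (b := 0) (by rw [map_zero, zero_add, hg])).2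

theorem iterate_eq_zero_of_ι_mul_X_pow_eq_X_mul (hE : Function.Bijective (skewEval ι X))
    {a : A} {n : ℕ} {g : R} (h : ι a * X ^ n = X * g) :
    (fun b => -δ (σ.symm b))^[n] a = 0 := by
  obtain ⟨h', hh'⟩ := exists_ι_mul_X_pow hcomm a n
  refine (eq_zero_of_ι_add_X_mul_eq_zero hcomm hE (g := h' - g) ?_).1
  rw [mul_sub, ← add_sub_assoc, ← hh', h, sub_self]

theorem exists_mul_X_pow_eq_X_mul (hsurj : Function.Surjective (skewEval ι X))
    (hnil : ∀ a : A, ∃ k : ℕ, (fun b => -δ (σ.symm b))^[k] a = 0) (f : R) :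
    ∃ (g : R) (n : ℕ), f * X ^ n = X * g := by
  obtain ⟨b, g, rfl⟩ := exists_eq_ι_add_X_mul hcomm hsurj f
  obtain ⟨k, hk⟩ := hnil b
  obtain ⟨h, hh⟩ := exists_ι_mul_X_pow hcomm b k
  exact ⟨h + g * X ^ k, k, by rw [add_mul, hh, hk, map_zero, zero_add, mul_add, mul_assoc]⟩

end

end SkewPolynomial

open SkewPolynomial

theorem stmt5_general {A R : Type*} [Ring A] [Ring R]
    (σ : A ≃+* A) (δ : A →+ A)
    (ι : A →+* R) (X : R)
    (hcomm : ∀ a : A, X * ι a = ι (σ a) * X + ι (δ a))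
    (hbasis : ∀ f : R, ∃! c : ℕ →₀ A, f = c.sum fun i a => ι a * X ^ i) :
    ((∀ (f : R) (m : ℕ), ∃ (g : R) (n : ℕ), f * X ^ n = X ^ m * g) ∧
     (∀ (f : R) (m : ℕ), X ^ m * f = 0 → ∃ n : ℕ, f * X ^ n = 0)) ↔
    (∀ a : A, ∃ k : ℕ, (fun b => -δ (σ.symm b))^[k] a = 0) := by
  have hE : Function.Bijective (skewEval ι X) :=
    (Function.bijective_iff_existsUnique _).mpr fun f => by
      simpa only [skewEval_apply, eq_comm] using hbasis f
  constructor
  · rintro ⟨hore, -⟩ a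
    obtain ⟨g, n, hg⟩ := hore (ι a) 1
    exact ⟨n, iterate_eq_zero_of_ι_mul_X_pow_eq_X_mul hcomm hE (by rwa [pow_one] at hg)⟩
  · intro hnil
    refine ⟨exists_mul_pow_eq_pow_mul (exists_mul_X_pow_eq_X_mul hcomm hE.2 hnil),
      fun f m hf => ⟨0, ?_⟩⟩
    rw [pow_zero, mul_one]
    exact ((isLeftRegular_X hcomm hE).pow m).mul_left_eq_zero_iff.mp hf

/-- Let `(σ, δ)` be a left skew derivation of a ring `A` with `σ` an
automorphism.  In the skew polynomial ring `A[X;σ,δ]` (modeled as a ring `R`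
with `ι : A →+* R`, `X : R`, the relation `X·a = σ(a)·X + δ(a)` and `{X^i}` a
left `A`-basis), the set `Σ = {1, X, X², …}` is a right denominator set (right
permutable and right reversible) if and only if `δ' = -δ∘σ⁻¹` is locally
nilpotent. -/
theorem stmt5 {A R : Type*} [Ring A] [Ring R]
    (σ : A ≃+* A) (δ : A →+ A)
    (hleib : ∀ a b : A, δ (a * b) = σ a * δ b + δ a * b)
    (ι : A →+* R) (X : R)
    (hcomm : ∀ a : A, X * ι a = ι (σ a) * X + ι (δ a))
    (hbasis : ∀ f : R, ∃! c : ℕ →₀ A, f = c.sum fun i a => ι a * X ^ i) :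
    ((∀ (f : R) (m : ℕ), ∃ (g : R) (n : ℕ), f * X ^ n = X ^ m * g) ∧
     (∀ (f : R) (m : ℕ), X ^ m * f = 0 → ∃ n : ℕ, f * X ^ n = 0)) ↔
    (∀ a : A, ∃ k : ℕ, (fun b => -δ (σ.symm b))^[k] a = 0) :=
  stmt5_general σ δ ι X hcomm hbasis
end

section
/- Let A = 𝔽[Y] be the polynomial ring over a field 𝔽 of characteristic 0, σ = id, and δ = d/dY the usual derivation. Then δ is locally nilpotent and surjective; moreover in the skew power series ring A[[X;σ,δ]] (with product extending Xa = aX + δ(a)) there exists a nonzero power series s with Xs = 0. Consequently Σ = {X^n} is not right reversible in A[[X;σ,δ]] and there is no ring structure on A((X)) containing A[[X;σ,δ]] with X^{-1}X = 1. -/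
/-- The constant power series `a`. -/
def Cs {A : Type*} [Ring A] (a : A) : ℕ → A := fun n => if n = 0 then a else 0

/-- The power series `X`. -/
def e1 {A : Type*} [Ring A] : ℕ → A := fun n => if n = 1 then (1 : A) else 0

/-- Multiplication of a power series by `X` on the right (the shift). -/
def shiftS {A : Type*} [Ring A] (s : ℕ → A) : ℕ → A := fun n =>
  match n with
  | 0 => 0
  | k + 1 => s k

theorem antider {F : Type*} [Field F] [CharZero F] (n : ℕ) (a : F) :
    Polynomial.derivative (Polynomial.monomial (n+1) (a / (n+1))) = Polynomial.monomial n a := by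
  rw [Polynomial.derivative_monomial]
  congr 1
  have h : ((n : F) + 1) ≠ 0 := Nat.cast_add_one_ne_zero n
  push_cast
  field_simp

/-- The series `sₙ = (-1)ⁿ Yⁿ / n!`. -/
noncomputable def sser (F : Type*) [Field F] : ℕ → Polynomial F :=
  fun n => Polynomial.monomial n ((-1 : F) ^ n * (n.factorial : F)⁻¹)

theorem sser_der {F : Type*} [Field F] [CharZero F] (k : ℕ) :
    Polynomial.derivative (sser F (k+1)) = - sser F k := by
  rw [sser, sser, Polynomial.derivative_monomial]
  simp only [Nat.add_sub_cancel, ← map_neg]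
  congr 1
  have h1 : ((k.factorial : F)) ≠ 0 := Nat.cast_ne_zero.2 k.factorial_ne_zero
  have h2 : ((k : F) + 1) ≠ 0 := Nat.cast_add_one_ne_zero k
  rw [Nat.factorial_succ]
  push_cast
  field_simp
  ring

theorem sser_zero (F : Type*) [Field F] : sser F 0 = 1 := by
  simp [sser]

theorem shift_iter {F : Type*} [Field F] (k : ℕ) :
    (shiftS^[k] (sser F)) k = sser F 0 := by
  induction k with
  | zero => rfl
  | succ k ih =>
    rw [Function.iterate_succ_apply']
    exact ih

/-- Let `A = 𝔽[Y]` be the polynomial ring over a field `𝔽` of characteristic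
`0`, `σ = id` and `δ = d/dY` the usual derivation.  Then `δ` is locally
nilpotent and surjective; moreover in the skew power series ring `A⟦X;σ,δ⟧`
(any ring `R` additively identified with `ℕ → A` via `φ`, with reasonable
product satisfying `X·s = s·X + δ(s)` coefficientwise) there exists a nonzero
power series `s` with `X·s = 0`.  Consequently `Σ = {Xⁿ}` is not right
reversible in `A⟦X;σ,δ⟧` (that `s` satisfies `s·X^k ≠ 0` for all `k`), and
there is no ring structure on `A⸨X⸩` containing `A⟦X;σ,δ⟧` (i.e. no ring `T`
with an injective ring homomorphism `ψ` from `R`) in which `X` has a left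
inverse `X⁻¹` with `X⁻¹·X = 1`. -/
theorem stmt6 {F : Type*} [Field F] [CharZero F] :
    (∀ p : Polynomial F, ∃ k : ℕ, (fun q : Polynomial F => Polynomial.derivative q)^[k] p = 0) ∧
    Function.Surjective (fun q : Polynomial F => Polynomial.derivative q) ∧
    (∀ (R : Type*) [Ring R] (φ : (ℕ → Polynomial F) ≃+ R),
      (∀ a b : Polynomial F, φ (Cs a) * φ (Cs b) = φ (Cs (a * b))) →
      (φ (Cs (1 : Polynomial F)) = 1) →
      (∀ (a : Polynomial F) (s : ℕ → Polynomial F),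
        φ (Cs a) * φ s = φ (fun n => a * s n)) →
      (∀ s : ℕ → Polynomial F, φ s * φ e1 = φ (shiftS s)) →
      (∀ s : ℕ → Polynomial F,
        φ e1 * φ s = φ s * φ e1 + φ (fun n => Polynomial.derivative (s n))) →
      (∃ s : ℕ → Polynomial F, φ s ≠ 0 ∧ φ e1 * φ s = 0 ∧
        (∀ k : ℕ, φ s * (φ e1) ^ k ≠ 0)) ∧
      ∀ (T : Type*) [Ring T] (ψ : R →+* T) (y : T),
        Function.Injective ⇑ψ → y * ψ (φ e1) = 1 → False) := by
  refine ⟨fun p => ⟨p.natDegree + 1, Polynomial.iterate_derivative_eq_zero (lt_add_one _)⟩,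
    ?_, ?_⟩
  · intro p
    refine ⟨p.sum (fun n a => Polynomial.monomial (n+1) (a / (n+1))), ?_⟩
    simp only [Polynomial.sum_def, map_sum, antider]
    exact (Polynomial.as_sum_support p).symm
  · intro R _ φ hCmul hC1 hCsmul hshift hδ
    set s : ℕ → Polynomial F := sser F with hs
    -- `X · s = 0`
    have hz : (shiftS s + fun n => Polynomial.derivative (s n)) = 0 := by
      funext n
      cases n with
      | zero =>
        show shiftS s 0 + Polynomial.derivative (s 0) = 0
        rw [hs, sser_zero]
        simp [shiftS]
      | succ k =>
        show shiftS s (k+1) + Polynomial.derivative (s (k+1)) = 0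
        show s k + Polynomial.derivative (s (k+1)) = 0
        rw [sser_der, add_neg_cancel]
    have hXs : φ e1 * φ s = 0 := by
      rw [hδ s, hshift s, ← map_add, hz, map_zero]
    have hφs : φ s ≠ 0 := by
      intro h
      have : s = 0 := φ.injective (by rw [h, map_zero])
      have h0 : s 0 = 0 := by rw [this]; rfl
      rw [hs, sser_zero] at h0
      exact one_ne_zero h0
    have hpow : ∀ k : ℕ, φ s * (φ e1) ^ k = φ (shiftS^[k] s) := by
      intro k
      induction k with
      | zero => simp
      | succ k ih =>
        rw [pow_succ, ← mul_assoc, ih, hshift, Function.iterate_succ_apply']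
    refine ⟨⟨s, hφs, hXs, ?_⟩, ?_⟩
    · intro k h
      rw [hpow] at h
      have : shiftS^[k] s = 0 := φ.injective (by rw [h, map_zero])
      have h0 : (shiftS^[k] s) k = 0 := by rw [this]; rfl
      rw [hs, shift_iter, sser_zero] at h0
      exact one_ne_zero h0
    · intro T _ ψ y hinj hy
      have h1 : ψ (φ e1) * ψ (φ s) = 0 := by rw [← map_mul, hXs, map_zero]
      have h2 : ψ (φ s) = 0 := by
        calc ψ (φ s) = (y * ψ (φ e1)) * ψ (φ s) := by rw [hy, one_mul]
        _ = y * (ψ (φ e1) * ψ (φ s)) := mul_assoc _ _ _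
        _ = 0 := by rw [h1, mul_zero]
      exact hφs (hinj (by rw [h2, map_zero]))
end

section
/- Let (σ,δ) be a left skew derivation on A such that the skew power series ring A[[X;σ,δ]] exists with compatible product (Xs = σ(s)X + δ(s) for all series s, with σ,δ applied coefficientwise). If δ is surjective, then Σ = {1,X,X^2,...} is right permutable in A[[X;σ,δ]]: for every f there exists a series s with f = σ(s)X + δ(s) = Xs. -/
/-- Let `(σ, δ)` be a left skew derivation on `A` such that the skew power
series ring `A⟦X;σ,δ⟧` exists with a reasonable and compatible product
(modeled by a ring `R` additively identified via `φ` with the power series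
`ℕ → A`, where `A` is a subring, the left `A`-module structure is by
restriction of scalars, `(Σ sᵢXⁱ)·X = Σ sᵢX^{i+1}`, and
`X·s = σ(s)·X + δ(s)` with `σ, δ` acting coefficientwise).  If `δ` is
surjective, then `Σ = {1, X, X², …}` is right permutable in `A⟦X;σ,δ⟧`:
for every `f` there exists a series `s` with `f = σ(s)X + δ(s) = X·s`. -/
theorem stmt7 {A R : Type*} [Ring A] [Ring R]
    (σ : A →+* A) (δ : A →+ A)
    (hleib : ∀ a b : A, δ (a * b) = σ a * δ b + δ a * b)
    (φ : (ℕ → A) ≃+ R)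
    (hA : ∀ a b : A, φ (Cs a) * φ (Cs b) = φ (Cs (a * b)))
    (hone : φ (Cs (1 : A)) = 1)
    (hmod : ∀ (a : A) (s : ℕ → A), φ (Cs a) * φ s = φ (fun n => a * s n))
    (hshift : ∀ s : ℕ → A, φ s * φ e1 = φ (shiftS s))
    (hcompat : ∀ s : ℕ → A,
      φ e1 * φ s = φ (fun n => σ (s n)) * φ e1 + φ (fun n => δ (s n)))
    (hsurj : Function.Surjective ⇑δ) :
    ∀ f : ℕ → A, ∃ s : ℕ → A,
      φ f = φ (fun n => σ (s n)) * φ e1 + φ (fun n => δ (s n)) ∧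
      φ f = φ e1 * φ s := by
  intro f
  -- define s recursively
  choose g hg using hsurj
  set s : ℕ → A := fun n => Nat.rec (g (f 0)) (fun k sk => g (f (k+1) - σ sk)) n with hs
  have hs0 : δ (s 0) = f 0 := hg (f 0)
  have hsn : ∀ k, δ (s (k+1)) = f (k+1) - σ (s k) := fun k => hg _
  refine ⟨s, ?_, ?_⟩
  · rw [hshift, ← map_add]
    congr 1
    funext n
    cases n with
    | zero => simp [shiftS, hs0]
    | succ k =>
      have : shiftS (fun n => σ (s n)) (k+1) = σ (s k) := rfl
      simp only [Pi.add_apply, this, hsn k]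
      abel
  · rw [hcompat, hshift, ← map_add]
    congr 1
    funext n
    cases n with
    | zero => simp [shiftS, hs0]
    | succ k =>
      have : shiftS (fun n => σ (s n)) (k+1) = σ (s k) := rfl
      simp only [Pi.add_apply, this, hsn k]
      abel
end

section
/- Let (σ,δ) be a left skew derivation on A such that A[[X;σ,δ]] exists with a compatible product. If δ is surjective and A ≠ 0, then Σ = {1,X,X^2,...} is not right reversible in A[[X;σ,δ]]: there exists a nonzero series s with Xs = 0, obtained recursively by s_0 = 1 and δ(s_{i+1}) = -σ(s_i). -/
/-- Let `(σ, δ)` be a left skew derivation on a nonzero ring `A` such that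
`A⟦X;σ,δ⟧` exists with a reasonable and compatible product (modeled by a ring
`R` additively identified via `φ` with `ℕ → A`).  If `δ` is surjective, then
`Σ = {1, X, X², …}` is not right reversible in `A⟦X;σ,δ⟧`: there exists a
nonzero series `s`, obtained recursively by `s₀ = 1` and
`δ(s_{i+1}) = -σ(sᵢ)`, with `X·s = 0` while `s·X^k ≠ 0` for every `k`. -/
theorem stmt8 {A R : Type*} [Ring A] [Nontrivial A] [Ring R]
    (σ : A →+* A) (δ : A →+ A)
    (hleib : ∀ a b : A, δ (a * b) = σ a * δ b + δ a * b)
    (φ : (ℕ → A) ≃+ R)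
    (hA : ∀ a b : A, φ (Cs a) * φ (Cs b) = φ (Cs (a * b)))
    (hone : φ (Cs (1 : A)) = 1)
    (hmod : ∀ (a : A) (s : ℕ → A), φ (Cs a) * φ s = φ (fun n => a * s n))
    (hshift : ∀ s : ℕ → A, φ s * φ e1 = φ (shiftS s))
    (hcompat : ∀ s : ℕ → A,
      φ e1 * φ s = φ (fun n => σ (s n)) * φ e1 + φ (fun n => δ (s n)))
    (hsurj : Function.Surjective ⇑δ) :
    ∃ s : ℕ → A, s 0 = 1 ∧ (∀ i : ℕ, δ (s (i + 1)) = -σ (s i)) ∧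
      φ e1 * φ s = 0 ∧ ∀ k : ℕ, φ s * (φ e1) ^ k ≠ 0 := by
  classical
  have hδ1 : δ (1 : A) = 0 := by
    have h := hleib 1 1
    simp only [one_mul, mul_one, map_one] at h
    have h2 : δ (1 : A) + δ 1 = δ 1 + 0 := by rw [add_zero]; exact h.symm
    exact add_left_cancel h2
  set s : ℕ → A := fun n =>
    Nat.rec (1 : A) (fun i si => Classical.choose (hsurj (-σ si))) n with hs
  have hs0 : s 0 = 1 := rfl
  have hsrec : ∀ i, δ (s (i + 1)) = -σ (s i) := fun i =>
    Classical.choose_spec (hsurj (-σ (s i)))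
  refine ⟨s, hs0, hsrec, ?_, ?_⟩
  · rw [hcompat, hshift, ← map_add]
    have hzero : (shiftS (fun n => σ (s n)) + fun n => δ (s n)) = 0 := by
      funext n
      cases n with
      | zero => simp [shiftS, hs0, hδ1]
      | succ k =>
        show σ (s k) + δ (s (k + 1)) = 0
        rw [hsrec, add_neg_cancel]
    rw [hzero, map_zero]
  · intro k
    have key : ∀ m : ℕ, φ s * (φ e1) ^ m = φ (shiftS^[m] s) := by
      intro m
      induction m with
      | zero => simp
      | succ m ih =>
        rw [pow_succ, ← mul_assoc, ih, hshift, Function.iterate_succ',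
          Function.comp_apply]
    have hval : ∀ m : ℕ, (shiftS^[m] s) m = 1 := by
      intro m
      induction m with
      | zero => exact hs0
      | succ m ih =>
        rw [Function.iterate_succ', Function.comp_apply]
        exact ih
    intro h
    rw [key k, ← map_zero φ] at h
    have h0 := φ.injective h
    have : (1 : A) = 0 := by rw [← hval k, h0]; rfl
    exact one_ne_zero this
end

section
/- Let (σ,δ) be a left skew derivation on A with σ an automorphism, and suppose A[[X;σ,δ]] carries a reasonable compatible ring structure. Then Σ = {1,X,X^2,...} is right permutable in A[[X;σ,δ]] if and only if for every series s there exist n ∈ ℕ and a series t with δ'^n(s) = Xt, where δ' = -δσ^{-1} acts coefficientwise. -/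
/-- Let `(σ, δ)` be a left skew derivation on `A` with `σ` an automorphism, and
suppose `A⟦X;σ,δ⟧` carries a reasonable compatible ring structure (modeled by a
ring `R` additively identified via `φ` with `ℕ → A`).  Then `Σ = {1, X, X², …}`
is right permutable in `A⟦X;σ,δ⟧` if and only if for every series `s` there
exist `n ∈ ℕ` and a series `t` with `δ'ⁿ(s) = X·t`, where `δ' = -δσ⁻¹` acts
coefficientwise. -/
theorem stmt10 {A R : Type*} [Ring A] [Ring R]
    (σ : A ≃+* A) (δ : A →+ A)
    (hleib : ∀ a b : A, δ (a * b) = σ a * δ b + δ a * b)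
    (φ : (ℕ → A) ≃+ R)
    (hA : ∀ a b : A, φ (Cs a) * φ (Cs b) = φ (Cs (a * b)))
    (hone : φ (Cs (1 : A)) = 1)
    (hmod : ∀ (a : A) (s : ℕ → A), φ (Cs a) * φ s = φ (fun n => a * s n))
    (hshift : ∀ s : ℕ → A, φ s * φ e1 = φ (shiftS s))
    (hcompat : ∀ s : ℕ → A,
      φ e1 * φ s = φ (fun n => σ (s n)) * φ e1 + φ (fun n => δ (s n))) :
    (∀ (f : ℕ → A) (m : ℕ), ∃ (s : ℕ → A) (n : ℕ),
        φ f * (φ e1) ^ n = (φ e1) ^ m * φ s) ↔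
    (∀ s : ℕ → A, ∃ (n : ℕ) (t : ℕ → A),
        φ ((fun (u : ℕ → A) => fun k => -δ (σ.symm (u k)))^[n] s) = φ e1 * φ t) := by
  set D : (ℕ → A) → ℕ → A := fun (u : ℕ → A) => fun k => -δ (σ.symm (u k)) with hD
  have star : ∀ s : ℕ → A,
      φ s * φ e1 = φ e1 * φ (fun k => σ.symm (s k)) + φ (D s) := by
    intro s
    have h := hcompat (fun k => σ.symm (s k))
    have h1 : (fun n => σ (σ.symm (s n))) = s := by funext n; simp
    have h2 : φ (D s) = - φ (fun n => δ (σ.symm (s n))) := by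
      rw [← map_neg]; congr 1
    rw [h1] at h
    rw [h2, h]; abel
  have key : ∀ (s : ℕ → A) (n : ℕ),
      ∃ c : R, φ s * (φ e1) ^ n = φ e1 * c + φ (D^[n] s) := by
    intro s n
    induction n with
    | zero => exact ⟨0, by simp⟩
    | succ n ih =>
      obtain ⟨c, hc⟩ := ih
      refine ⟨c * φ e1 + φ (fun k => σ.symm ((D^[n] s) k)), ?_⟩
      rw [pow_succ, ← mul_assoc, hc, add_mul, star (D^[n] s),
        Function.iterate_succ_apply']
      noncomm_ring
  constructor
  · intro H s
    obtain ⟨u, n, hu⟩ := H s 1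
    obtain ⟨c, hc⟩ := key s n
    refine ⟨n, φ.symm (φ u - c), ?_⟩
    rw [φ.apply_symm_apply]
    have h3 : φ (D^[n] s) = φ s * (φ e1) ^ n - φ e1 * c := by
      rw [hc]; noncomm_ring
    rw [h3, hu, pow_one]; noncomm_ring
  · intro H f m
    induction m generalizing f with
    | zero => exact ⟨f, 0, by simp⟩
    | succ m ih =>
      obtain ⟨s₀, n₀, h0⟩ := ih f
      obtain ⟨n₁, t, ht⟩ := H s₀
      obtain ⟨c, hc⟩ := key s₀ n₁
      refine ⟨φ.symm (c + φ t), n₀ + n₁, ?_⟩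
      rw [φ.apply_symm_apply, pow_add, ← mul_assoc, h0, mul_assoc, hc, ht,
        pow_succ]
      noncomm_ring
end

section
/- Let (σ,δ) be a left skew derivation on A with σ an automorphism and suppose A[[X;σ,δ]] exists with reasonable compatible product. If δ' = -δσ^{-1} is nilpotent (δ'^m = 0 for some m), then Σ = {1,X,X^2,...} is a right denominator set in A[[X;σ,δ]], and in the ring of fractions the identity X^{-1}s = Σ_{k=0}^{m} σ'δ'^k(s) X^{-1-k} holds for all s ∈ A[[X;σ,δ]]. -/
/-- Let `(σ, δ)` be a left skew derivation on `A` with `σ` an automorphism, and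
suppose `A⟦X;σ,δ⟧` exists with a reasonable compatible product (modeled by a
ring `R` additively identified via `φ` with `ℕ → A`).  If `δ' = -δσ⁻¹` is
nilpotent, say `δ'^m = 0`, then `Σ = {1, X, X², …}` is a right denominator set
(right permutable and right reversible) in `A⟦X;σ,δ⟧`, and in any ring of
fractions inverting `X` (a ring `T` with injective `j : R →+* T` and `y` a
two-sided inverse of `j(X)`) the identity
`X⁻¹·s = Σ_{k=0}^{m} σ'δ'^k(s)·X^{-1-k}` holds for every `s ∈ A⟦X;σ,δ⟧`. -/
theorem stmt11 {A R : Type*} [Ring A] [Ring R]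
    (σ : A ≃+* A) (δ : A →+ A)
    (hleib : ∀ a b : A, δ (a * b) = σ a * δ b + δ a * b)
    (m : ℕ) (hnil : ∀ a : A, (fun b => -δ (σ.symm b))^[m] a = 0)
    (φ : (ℕ → A) ≃+ R)
    (hA : ∀ a b : A, φ (Cs a) * φ (Cs b) = φ (Cs (a * b)))
    (hone : φ (Cs (1 : A)) = 1)
    (hmod : ∀ (a : A) (s : ℕ → A), φ (Cs a) * φ s = φ (fun n => a * s n))
    (hshift : ∀ s : ℕ → A, φ s * φ e1 = φ (shiftS s))
    (hcompat : ∀ s : ℕ → A,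
      φ e1 * φ s = φ (fun n => σ (s n)) * φ e1 + φ (fun n => δ (s n))) :
    (∀ (f : ℕ → A) (k : ℕ), ∃ (s : ℕ → A) (n : ℕ),
        φ f * (φ e1) ^ n = (φ e1) ^ k * φ s) ∧
    (∀ (f : ℕ → A) (k : ℕ), (φ e1) ^ k * φ f = 0 → ∃ n : ℕ, φ f * (φ e1) ^ n = 0) ∧
    (∀ (T : Type*) [Ring T] (j : R →+* T) (y : T),
      Function.Injective ⇑j → y * j (φ e1) = 1 → j (φ e1) * y = 1 →
      ∀ s : ℕ → A,
        y * j (φ s) =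
          ∑ k ∈ Finset.range (m + 1),
            j (φ (fun n => σ.symm ((fun b => -δ (σ.symm b))^[k] (s n)))) * y ^ (k + 1)) := by
  set d : A → A := fun b => -δ (σ.symm b) with hd
  -- the fundamental commutation rule, pulled to the other side
  have rel : ∀ t : ℕ → A, φ t * φ e1 =
      φ e1 * φ (fun n => σ.symm (t n)) + φ (fun n => d (t n)) := by
    intro t
    have h := hcompat (fun n => σ.symm (t n))
    simp only [RingEquiv.apply_symm_apply] at h
    have hz : φ (fun n => δ (σ.symm (t n))) + φ (fun n => d (t n)) = 0 := by
      rw [← map_add]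
      have : ((fun n => δ (σ.symm (t n))) + fun n => d (t n)) = 0 := by
        funext n; simp [hd]
      rw [this, map_zero]
    rw [h, add_assoc, hz, add_zero]
  -- multiplication by X on the left, coefficientwise
  have hXs : ∀ t : ℕ → A, φ e1 * φ t =
      φ (shiftS (fun k => σ (t k)) + fun n => δ (t n)) := by
    intro t
    rw [hcompat t, hshift, ← map_add]
  -- X is left regular
  have hreg1 : ∀ f : ℕ → A, φ e1 * φ f = 0 → f = 0 := by
    intro f hf
    rw [hXs] at hf
    have h0 : (shiftS (fun k => σ (f k)) + fun n => δ (f n)) = 0 :=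
      φ.injective (hf.trans (map_zero φ).symm)
    have key : ∀ n : ℕ, σ (f n) = -δ (f (n + 1)) := by
      intro n
      have := congrFun h0 (n + 1)
      simp only [Pi.add_apply, Pi.zero_apply, shiftS] at this
      exact eq_neg_of_add_eq_zero_left this
    set g : ℕ → A := fun n => -δ (f n) with hgdef
    have hfg : ∀ n, f n = σ.symm (g (n + 1)) := by
      intro n
      rw [show g (n + 1) = σ (f n) from (key n).symm, RingEquiv.symm_apply_apply]
    have hgrec : ∀ n, g n = d (g (n + 1)) := by
      intro n
      show -δ (f n) = -δ (σ.symm (g (n + 1)))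
      rw [← hfg n]
    have hiter : ∀ (jj : ℕ) (n : ℕ), g n = d^[jj] (g (n + jj)) := by
      intro jj
      induction jj with
      | zero => intro n; simp
      | succ jj ih =>
        intro n
        have hn : n + (jj + 1) = (n + 1) + jj := by omega
        rw [hn, Function.iterate_succ_apply', ← ih (n + 1)]
        exact hgrec n
    funext n
    have : g (n + 1) = 0 := by
      rw [hiter m (n + 1)]
      exact hnil _
    rw [show f n = σ.symm (g (n + 1)) from hfg n, this, map_zero]
    rfl
  -- powers of X are left regular
  have hregk : ∀ (k : ℕ) (f : ℕ → A), (φ e1) ^ k * φ f = 0 → f = 0 := by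
    intro k
    induction k with
    | zero =>
      intro f hf
      rw [pow_zero, one_mul] at hf
      exact φ.injective (hf.trans (map_zero φ).symm)
    | succ k ih =>
      intro f hf
      rw [pow_succ, mul_assoc, hXs] at hf
      have := ih _ hf
      apply hreg1
      rw [hXs, this, map_zero]
  -- right Ore: one step
  have ore0 : ∀ (jj : ℕ) (f : ℕ → A), ∃ g : ℕ → A,
      φ f * (φ e1) ^ jj = φ e1 * φ g + φ (fun n => d^[jj] (f n)) := by
    intro jj
    induction jj with
    | zero =>
      intro f
      refine ⟨0, ?_⟩
      simp [Function.iterate_zero]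
    | succ jj ih =>
      intro f
      obtain ⟨g, hg⟩ := ih f
      refine ⟨shiftS g + fun n => σ.symm (d^[jj] (f n)), ?_⟩
      have h1 : φ f * (φ e1) ^ (jj + 1) =
          (φ e1 * φ g + φ (fun n => d^[jj] (f n))) * φ e1 := by
        rw [pow_succ, ← mul_assoc, hg]
      rw [h1, add_mul, mul_assoc, hshift, rel (fun n => d^[jj] (f n))]
      simp only [map_add, mul_add, Function.iterate_succ_apply', add_assoc]
  have orem : ∀ f : ℕ → A, ∃ g, φ f * (φ e1) ^ m = φ e1 * φ g := by
    intro f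
    obtain ⟨g, hg⟩ := ore0 m f
    refine ⟨g, ?_⟩
    rw [hg]
    have : (fun n => d^[m] (f n)) = (0 : ℕ → A) := funext fun n => hnil (f n)
    rw [this, map_zero, add_zero]
  have orek : ∀ (k : ℕ) (f : ℕ → A), ∃ g,
      φ f * (φ e1) ^ (k * m) = (φ e1) ^ k * φ g := by
    intro k
    induction k with
    | zero => intro f; exact ⟨f, by simp⟩
    | succ k ih =>
      intro f
      obtain ⟨g, hg⟩ := ih f
      obtain ⟨g', hg'⟩ := orem g
      refine ⟨g', ?_⟩
      have hm : (k + 1) * m = k * m + m := by ring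
      rw [hm, pow_add, ← mul_assoc, hg, mul_assoc, hg', pow_succ, mul_assoc]
  refine ⟨?_, ?_, ?_⟩
  · intro f k
    obtain ⟨g, hg⟩ := orek k f
    exact ⟨g, k * m, hg⟩
  · intro f k hf
    refine ⟨0, ?_⟩
    rw [hregk k f hf, map_zero, zero_mul]
  · intro T _ j y hinj hy1 hy2 s
    have key : ∀ k : ℕ, j (φ (fun n => σ.symm (d^[k] (s n)))) * y ^ (k + 1)
        = y * j (φ (fun n => d^[k] (s n))) * y ^ k
          - y * j (φ (fun n => d^[k + 1] (s n))) * y ^ (k + 1) := by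
      intro k
      have hr := rel (fun n => d^[k] (s n))
      have hr2 : φ e1 * φ (fun n => σ.symm (d^[k] (s n))) =
          φ (fun n => d^[k] (s n)) * φ e1 - φ (fun n => d (d^[k] (s n))) :=
        eq_sub_iff_add_eq.mpr hr.symm
      have hj := congrArg j hr2
      simp only [map_mul, map_sub] at hj
      calc j (φ (fun n => σ.symm (d^[k] (s n)))) * y ^ (k + 1)
          = y * (j (φ e1) * j (φ (fun n => σ.symm (d^[k] (s n))))) * y ^ (k + 1) := by
            rw [← mul_assoc, hy1, one_mul]
        _ = y * (j (φ (fun n => d^[k] (s n))) * j (φ e1)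
              - j (φ (fun n => d (d^[k] (s n))))) * y ^ (k + 1) := by rw [hj]
        _ = y * j (φ (fun n => d^[k] (s n))) * (j (φ e1) * y ^ (k + 1))
              - y * j (φ (fun n => d (d^[k] (s n)))) * y ^ (k + 1) := by
            noncomm_ring
        _ = y * j (φ (fun n => d^[k] (s n))) * y ^ k
              - y * j (φ (fun n => d^[k + 1] (s n))) * y ^ (k + 1) := by
            rw [pow_succ' y k, ← mul_assoc (j (φ e1)) y, hy2, one_mul]
            simp only [Function.iterate_succ_apply']
    rw [Finset.sum_congr rfl fun k _ => key k]
    have hsum := Finset.sum_range_sub'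
      (fun k => y * j (φ (fun n => d^[k] (s n))) * y ^ k) (m + 1)
    rw [hsum]
    have hz : (fun n => d^[m + 1] (s n)) = (0 : ℕ → A) := by
      funext n
      rw [Function.iterate_succ_apply]
      exact hnil (d (s n))
    rw [hz, map_zero, map_zero, mul_zero, zero_mul, sub_zero, pow_zero, mul_one]
    rfl
end

section
/- Let (σ,δ) be a left skew derivation with σ an automorphism, δ locally nilpotent, and δ'^m = 0. In the skew Laurent series ring A((X;σ,δ)), for every s ∈ A[[X;σ,δ]] and every n ≥ 1: X^{-n}s = Σ_{k=0}^{n(m-1)} ( Σ_{k_1+⋯+k_n = k, each k_j ≤ m-1} σ'δ'^{k_1}⋯σ'δ'^{k_n}(s) ) X^{-n-k}. In particular, the set of Laurent polynomials A[X,X^{-1}] is a subring of A((X;σ,δ)). -/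
/-- `chainApply σ' δ' [k₁, …, kₙ] x = σ'δ'^{k₁}(σ'δ'^{k₂}(⋯σ'δ'^{kₙ}(x)))`. -/
def chainApply {A : Type*} [Ring A] (σinv d' : A → A) (v : List ℕ) (x : A) : A :=
  v.foldr (fun kj y => σinv (d'^[kj] y)) x

/-- Let `(σ, δ)` be a left skew derivation with `σ` an automorphism, `δ`
locally nilpotent and `δ'^m = 0`, where `δ' = -δσ⁻¹`, `σ' = σ⁻¹`.  In the skew
Laurent series ring `A⸨X;σ,δ⸩` -- modeled here by any ring `T` together with an
injective ring homomorphism `j` from the skew power series ring `R = A⟦X;σ,δ⟧`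
(a ring with reasonable compatible product, additively identified with `ℕ → A`
via `φ`) such that the image of `X` has a two-sided inverse `y = X⁻¹` -- for
every `s ∈ A⟦X;σ,δ⟧` and every `n ≥ 1`,
`X^{-n}·s = Σ_{k=0}^{n(m-1)} (Σ_{k₁+⋯+kₙ=k, kⱼ≤m-1} σ'δ'^{k₁}⋯σ'δ'^{kₙ}(s))·X^{-n-k}`.
In particular, the set of Laurent polynomials `A[X,X⁻¹]` (the additive subgroup
generated by the monomials `a·Xⁱ` and `a·X^{-i}`) is a subring of
`A⸨X;σ,δ⸩`. -/
theorem stmt13 {A R : Type*} [Ring A] [Ring R]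
    (σ : A ≃+* A) (δ : A →+ A)
    (hleib : ∀ a b : A, δ (a * b) = σ a * δ b + δ a * b)
    (hln : ∀ a : A, ∃ k : ℕ, (⇑δ)^[k] a = 0)
    (m : ℕ) (hnil : ∀ a : A, (fun b => -δ (σ.symm b))^[m] a = 0)
    (φ : (ℕ → A) ≃+ R)
    (hA : ∀ a b : A, φ (Cs a) * φ (Cs b) = φ (Cs (a * b)))
    (hone : φ (Cs (1 : A)) = 1)
    (hmod : ∀ (a : A) (s : ℕ → A), φ (Cs a) * φ s = φ (fun n => a * s n))
    (hshift : ∀ s : ℕ → A, φ s * φ e1 = φ (shiftS s))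
    (hcompat : ∀ s : ℕ → A,
      φ e1 * φ s = φ (fun n => σ (s n)) * φ e1 + φ (fun n => δ (s n))) :
    ∀ (T : Type*) [Ring T] (j : R →+* T) (y : T),
      Function.Injective ⇑j → y * j (φ e1) = 1 → j (φ e1) * y = 1 →
      (∀ (n : ℕ), 1 ≤ n → ∀ s : ℕ → A,
        y ^ n * j (φ s) =
          ∑ k ∈ Finset.range (n * (m - 1) + 1),
            j (φ (fun c =>
              ∑ v ∈ Finset.univ.filter (fun v : Fin n → Fin m => ∑ i, (v i : ℕ) = k),
                chainApply (⇑σ.symm) (fun b => -δ (σ.symm b))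
                  (List.ofFn fun i => (v i : ℕ)) (s c))) * y ^ (n + k)) ∧
      ∃ S : Subring T,
        (S : Set T) =
          (AddSubgroup.closure
            {t : T | ∃ (a : A) (i : ℕ),
              t = j (φ (Cs a)) * j (φ e1) ^ i ∨ t = j (φ (Cs a)) * y ^ i} : Set T) := by
  intro T _ j y hinj hyX hXy
  set d' : A → A := fun b => -δ (σ.symm b) with hd'
  set X : T := j (φ e1) with hX
  -- basic step relation
  have hstep : ∀ t : ℕ → A, y * j (φ t) =
      j (φ fun c => σ.symm (t c)) * y + y * (j (φ fun c => d' (t c)) * y) := by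
    intro t
    have h1 := congrArg j (hcompat (fun c => σ.symm (t c)))
    simp only [RingEquiv.apply_symm_apply, map_add, map_mul] at h1
    -- h1 : X * j (φ (σ' t)) = j (φ t) * X + j (φ (fun n => δ (σ.symm (t n))))
    have h2 : j (φ fun c => d' (t c)) = - j (φ fun n => δ (σ.symm (t n))) := by
      rw [← map_neg j, ← map_neg φ]
      congr 1
    have h3 : j (φ t) = (X * j (φ fun c => σ.symm (t c)) - j (φ fun n => δ (σ.symm (t n)))) * y := by
      rw [h1, add_sub_cancel_right, mul_assoc, hXy, mul_one]
    calc y * j (φ t)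
        = y * ((X * j (φ fun c => σ.symm (t c)) - j (φ fun n => δ (σ.symm (t n)))) * y) := by
          rw [← h3]
      _ = (y * X) * (j (φ fun c => σ.symm (t c)) * y) - y * (j (φ fun n => δ (σ.symm (t n))) * y) := by
          noncomm_ring
      _ = _ := by rw [hyX, one_mul, h2]; noncomm_ring
  -- iterated version up to N
  have haux : ∀ (N : ℕ) (t : ℕ → A), y * j (φ t) =
      (∑ k ∈ Finset.range N, j (φ fun c => σ.symm (d'^[k] (t c))) * y ^ (k + 1)) +
        y * (j (φ fun c => d'^[N] (t c)) * y ^ N) := by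
    intro N
    induction N with
    | zero => intro t; simp
    | succ N ih =>
      intro t
      rw [ih t, Finset.sum_range_succ]
      have : y * (j (φ fun c => d'^[N] (t c)) * y ^ N) =
          j (φ fun c => σ.symm (d'^[N] (t c))) * y ^ (N + 1) +
            y * (j (φ fun c => d'^[N + 1] (t c)) * y ^ (N + 1)) := by
        have h4 := hstep (fun c => d'^[N] (t c))
        calc y * (j (φ fun c => d'^[N] (t c)) * y ^ N)
            = (y * j (φ fun c => d'^[N] (t c))) * y ^ N := by rw [mul_assoc]
          _ = (j (φ fun c => σ.symm (d'^[N] (t c))) * y +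
                y * (j (φ fun c => d' (d'^[N] (t c))) * y)) * y ^ N := by rw [h4]
          _ = _ := by
              simp only [← Function.iterate_succ_apply' d']
              have e1' : (j (φ fun c => σ.symm (d'^[N] (t c))) * y) * y ^ N =
                  j (φ fun c => σ.symm (d'^[N] (t c))) * y ^ (N + 1) := by
                rw [mul_assoc, ← pow_succ']
              have e2' : (y * (j (φ fun c => d'^[N + 1] (t c)) * y)) * y ^ N =
                  y * (j (φ fun c => d'^[N + 1] (t c)) * y ^ (N + 1)) := by
                rw [mul_assoc, mul_assoc, ← pow_succ']
              rw [add_mul, e1', e2']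
      rw [this, add_assoc]
  have hL1 : ∀ t : ℕ → A, y * j (φ t) =
      ∑ k ∈ Finset.range m, j (φ fun c => σ.symm (d'^[k] (t c))) * y ^ (k + 1) := by
    intro t
    rw [haux m t]
    have : (fun c => d'^[m] (t c)) = (0 : ℕ → A) := by funext c; exact hnil (t c)
    rw [this, map_zero, map_zero, zero_mul, mul_zero, add_zero]
  -- the clean chain formula
  have hL2 : ∀ (n : ℕ) (t : ℕ → A), y ^ n * j (φ t) =
      ∑ v : Fin n → Fin m,
        j (φ fun c => chainApply (⇑σ.symm) d' (List.ofFn fun i => (v i : ℕ)) (t c)) *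
          y ^ (n + ∑ i, (v i : ℕ)) := by
    intro n
    induction n with
    | zero =>
      intro t
      rw [Finset.univ_unique, Finset.sum_singleton]
      simp [chainApply]
    | succ n ih =>
      intro t
      have lhs : y ^ (n + 1) * j (φ t) =
          ∑ v : Fin n → Fin m, ∑ k ∈ Finset.range m,
            j (φ fun c => σ.symm (d'^[k]
              (chainApply (⇑σ.symm) d' (List.ofFn fun i => (v i : ℕ)) (t c)))) *
              y ^ ((n + 1) + (k + ∑ i, (v i : ℕ))) := by
        rw [pow_succ', mul_assoc, ih t, Finset.mul_sum]
        refine Finset.sum_congr rfl fun v _ => ?_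
        rw [← mul_assoc, hL1, Finset.sum_mul]
        refine Finset.sum_congr rfl fun k _ => ?_
        rw [mul_assoc, ← pow_add]
        congr 2
        omega
      rw [lhs, Finset.sum_comm, ← Fin.sum_univ_eq_sum_range, ← Fintype.sum_prod_type']
      refine Fintype.sum_equiv (Fin.consEquiv fun _ => Fin m) _ _ fun p => ?_
      obtain ⟨k, v⟩ := p
      simp only [Fin.consEquiv_apply]
      have hl : (List.ofFn fun i : Fin (n + 1) => ((Fin.cons k v : ∀ _ : Fin (n+1), Fin m) i : ℕ)) =
          (k : ℕ) :: List.ofFn fun i : Fin n => (v i : ℕ) := by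
        rw [List.ofFn_succ]
        simp [Fin.cons_zero, Fin.cons_succ]
      have hs : (∑ i, ((Fin.cons k v : ∀ _ : Fin (n+1), Fin m) i : ℕ)) = (k : ℕ) + ∑ i, (v i : ℕ) := by
        rw [Fin.sum_univ_succ]
        simp [Fin.cons_zero, Fin.cons_succ]
      rw [hl, hs]
      rfl
  constructor
  · -- Part 1: the formula
    intro n hn s
    rw [hL2 n s]
    symm
    have hfn : ∀ k : ℕ, (fun c => ∑ v ∈ Finset.univ.filter
          (fun v : Fin n → Fin m => ∑ i, (v i : ℕ) = k),
          chainApply (⇑σ.symm) d' (List.ofFn fun i => (v i : ℕ)) (s c)) =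
        ∑ v ∈ Finset.univ.filter (fun v : Fin n → Fin m => ∑ i, (v i : ℕ) = k),
          (fun c => chainApply (⇑σ.symm) d' (List.ofFn fun i => (v i : ℕ)) (s c)) := by
      intro k; funext c
      simp only [Finset.sum_apply]
    have hmaps : ∀ v ∈ (Finset.univ : Finset (Fin n → Fin m)),
        (∑ i, (v i : ℕ)) ∈ Finset.range (n * (m - 1) + 1) := by
      intro v _
      simp only [Finset.mem_range, Nat.lt_succ_iff]
      have h1 : ∑ i, (v i : ℕ) ≤ ∑ _i : Fin n, (m - 1) :=
        Finset.sum_le_sum fun i _ => by have := (v i).isLt; omega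
      have h2 : ∑ _i : Fin n, (m - 1) = n * (m - 1) := by
        simp [Finset.sum_const, mul_comm]
      omega
    calc (∑ k ∈ Finset.range (n * (m - 1) + 1),
          j (φ (fun c => ∑ v ∈ Finset.univ.filter
            (fun v : Fin n → Fin m => ∑ i, (v i : ℕ) = k),
            chainApply (⇑σ.symm) d' (List.ofFn fun i => (v i : ℕ)) (s c))) * y ^ (n + k))
        = ∑ k ∈ Finset.range (n * (m - 1) + 1),
            ∑ v ∈ Finset.univ.filter (fun v : Fin n → Fin m => ∑ i, (v i : ℕ) = k),
              j (φ fun c => chainApply (⇑σ.symm) d' (List.ofFn fun i => (v i : ℕ)) (s c)) *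
                y ^ (n + ∑ i, (v i : ℕ)) := by
          refine Finset.sum_congr rfl fun k _ => ?_
          rw [hfn k, map_sum, map_sum, Finset.sum_mul]
          refine Finset.sum_congr rfl fun v hv => ?_
          rw [(Finset.mem_filter.mp hv).2]
      _ = _ := Finset.sum_fiberwise_of_maps_to hmaps _
  · -- Part 2: the subring
    set M : Set T := {t : T | ∃ (a : A) (i : ℕ),
        t = j (φ (Cs a)) * X ^ i ∨ t = j (φ (Cs a)) * y ^ i} with hMdef
    set G : AddSubgroup T := AddSubgroup.closure M with hGdef
    have hmemX : ∀ (a : A) (i : ℕ), j (φ (Cs a)) * X ^ i ∈ G :=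
      fun a i => AddSubgroup.subset_closure ⟨a, i, Or.inl rfl⟩
    have hmemY : ∀ (a : A) (i : ℕ), j (φ (Cs a)) * y ^ i ∈ G :=
      fun a i => AddSubgroup.subset_closure ⟨a, i, Or.inr rfl⟩
    -- collapsing powers
    have hXyP : ∀ p q : ℕ, X ^ p * y ^ q = X ^ (p - q) * y ^ (q - p) := by
      intro p
      induction p with
      | zero => intro q; simp
      | succ p ih =>
        intro q
        cases q with
        | zero => simp
        | succ q =>
          have h : X ^ (p + 1) * y ^ (q + 1) = X ^ p * y ^ q := by
            rw [pow_succ X p, pow_succ' y q, mul_assoc, ← mul_assoc X y, hXy, one_mul]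
          rw [Nat.succ_sub_succ, Nat.succ_sub_succ, ← ih q]
          exact h
    have hyXP : ∀ p q : ℕ, y ^ q * X ^ p = y ^ (q - p) * X ^ (p - q) := by
      intro p
      induction p with
      | zero => intro q; simp
      | succ p ih =>
        intro q
        cases q with
        | zero => simp
        | succ q =>
          have h : y ^ (q + 1) * X ^ (p + 1) = y ^ q * X ^ p := by
            rw [pow_succ y q, pow_succ' X p, mul_assoc, ← mul_assoc y X, hyX, one_mul]
          rw [Nat.succ_sub_succ, Nat.succ_sub_succ, ← ih q]
          exact h
    have helpXY : ∀ (c : A) (p q : ℕ), j (φ (Cs c)) * (X ^ p * y ^ q) ∈ G := by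
      intro c p q
      rw [hXyP p q]
      rcases le_total p q with h | h
      · have hpq : p - q = 0 := by omega
        rw [hpq, pow_zero, one_mul]; exact hmemY c (q - p)
      · have hqp : q - p = 0 := by omega
        rw [hqp, pow_zero, mul_one]; exact hmemX c (p - q)
    have helpYX : ∀ (c : A) (p q : ℕ), j (φ (Cs c)) * (y ^ q * X ^ p) ∈ G := by
      intro c p q
      rw [hyXP p q]
      rcases le_total p q with h | h
      · have hpq : p - q = 0 := by omega
        rw [hpq, pow_zero, mul_one]; exact hmemY c (q - p)
      · have hqp : q - p = 0 := by omega
        rw [hqp, pow_zero, one_mul]; exact hmemX c (p - q)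
    have hC : ∀ a b : A, j (φ (Cs a)) * j (φ (Cs b)) = j (φ (Cs (a * b))) := by
      intro a b; rw [← map_mul, hA]
    -- commuting X and y past constants
    have hXc : ∀ b : A, X * j (φ (Cs b)) = j (φ (Cs (σ b))) * X + j (φ (Cs (δ b))) := by
      intro b
      have h := congrArg j (hcompat (Cs b))
      simp only [map_add, map_mul] at h
      have hσC : (fun n => σ (Cs b n)) = Cs (σ b) := by
        funext n; simp only [Cs, apply_ite ⇑σ, map_zero]
      have hδC : (fun n => δ (Cs b n)) = Cs (δ b) := by
        funext n; simp only [Cs, apply_ite ⇑δ, map_zero]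
      rw [hσC, hδC] at h
      exact h
    have hdz : d' 0 = 0 := by simp [hd']
    have hCs0 : ∀ (k : ℕ) (b : A),
        (fun c => σ.symm (d'^[k] (Cs b c))) = Cs (σ.symm (d'^[k] b)) := by
      intro k b
      funext c
      by_cases hc : c = 0
      · simp [Cs, hc]
      · simp [Cs, hc, Function.iterate_fixed hdz k, map_zero]
    have hyc : ∀ b : A, y * j (φ (Cs b)) =
        ∑ k ∈ Finset.range m, j (φ (Cs (σ.symm (d'^[k] b)))) * y ^ (k + 1) := by
      intro b
      rw [hL1 (Cs b)]
      exact Finset.sum_congr rfl fun k _ => by rw [hCs0 k b]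
    -- closure is stable under left multiplication
    have hXG : ∀ t ∈ G, X * t ∈ G := by
      intro t ht
      refine AddSubgroup.closure_induction ?_ ?_ ?_ ?_ ht
      · rintro g ⟨b, i, rfl | rfl⟩
        · rw [← mul_assoc, hXc b, add_mul, mul_assoc, ← pow_succ']
          exact add_mem (hmemX _ _) (hmemX _ _)
        · rw [← mul_assoc, hXc b, add_mul, mul_assoc]
          have hp1 : X * y ^ i = X ^ 1 * y ^ i := by rw [pow_one]
          rw [hp1]
          exact add_mem (helpXY _ 1 i) (hmemY _ _)
      · rw [mul_zero]; exact zero_mem _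
      · intro g h _ _ hg hh; rw [mul_add]; exact add_mem hg hh
      · intro g _ hg; rw [mul_neg]; exact neg_mem hg
    have hyG : ∀ t ∈ G, y * t ∈ G := by
      intro t ht
      refine AddSubgroup.closure_induction ?_ ?_ ?_ ?_ ht
      · rintro g ⟨b, i, rfl | rfl⟩
        · rw [← mul_assoc, hyc b, Finset.sum_mul]
          refine sum_mem fun k _ => ?_
          rw [mul_assoc]
          exact helpYX _ _ _
        · rw [← mul_assoc, hyc b, Finset.sum_mul]
          refine sum_mem fun k _ => ?_
          rw [mul_assoc, ← pow_add]
          exact hmemY _ _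
      · rw [mul_zero]; exact zero_mem _
      · intro g h _ _ hg hh; rw [mul_add]; exact add_mem hg hh
      · intro g _ hg; rw [mul_neg]; exact neg_mem hg
    have hCG : ∀ (a : A), ∀ t ∈ G, j (φ (Cs a)) * t ∈ G := by
      intro a t ht
      refine AddSubgroup.closure_induction ?_ ?_ ?_ ?_ ht
      · rintro g ⟨b, i, rfl | rfl⟩
        · rw [← mul_assoc, hC]; exact hmemX _ _
        · rw [← mul_assoc, hC]; exact hmemY _ _
      · rw [mul_zero]; exact zero_mem _
      · intro g h _ _ hg hh; rw [mul_add]; exact add_mem hg hh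
      · intro g _ hg; rw [mul_neg]; exact neg_mem hg
    have hXpow : ∀ (i : ℕ), ∀ t ∈ G, X ^ i * t ∈ G := by
      intro i
      induction i with
      | zero => intro t ht; simpa using ht
      | succ i ih =>
        intro t ht
        rw [pow_succ', mul_assoc]
        exact hXG _ (ih t ht)
    have hypow : ∀ (i : ℕ), ∀ t ∈ G, y ^ i * t ∈ G := by
      intro i
      induction i with
      | zero => intro t ht; simpa using ht
      | succ i ih =>
        intro t ht
        rw [pow_succ', mul_assoc]
        exact hyG _ (ih t ht)
    have hmulG : ∀ s t : T, s ∈ G → t ∈ G → s * t ∈ G := by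
      intro s t hs ht
      refine AddSubgroup.closure_induction ?_ ?_ ?_ ?_ hs
      · rintro g ⟨a, i, rfl | rfl⟩
        · rw [mul_assoc]; exact hCG a _ (hXpow i t ht)
        · rw [mul_assoc]; exact hCG a _ (hypow i t ht)
      · rw [zero_mul]; exact zero_mem _
      · intro g h _ _ hg hh; rw [add_mul]; exact add_mem hg hh
      · intro g _ hg; rw [neg_mul]; exact neg_mem hg
    have honeG : (1 : T) ∈ G := by
      have h1 : (1 : T) = j (φ (Cs (1 : A))) * X ^ 0 := by
        rw [hone, map_one, pow_zero, mul_one]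
      rw [h1]
      exact hmemX 1 0
    exact ⟨{ carrier := G,
             zero_mem' := zero_mem G,
             add_mem' := fun h1 h2 => add_mem h1 h2,
             neg_mem' := fun h => neg_mem h,
             one_mem' := honeG,
             mul_mem' := fun h1 h2 => hmulG _ _ h1 h2 }, rfl⟩
end

section
/- Let (σ,δ) be a left skew derivation on A with δ nilpotent, say δ^m = 0. Then in the skew power series ring A[[X;σ,δ]], for every series s = Σ s_iX^i and every a ∈ A: s·a = Σ_{i=0}^{∞} ( Σ_{j=i}^{(i+1)m-1} s_j N_i^j(a) ) X^i, where N_i^j are the iterated skew-derivation operators (N_i^{n+1} = σN_{i-1}^n + δN_i^n, N_0^0 = id). -/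
/-- The iterated skew-derivation operators `N_i^n` (here `Nmap σ δ n i = N_i^n`),
defined recursively by `N_i^{n+1} = σ ∘ N_{i-1}^n + δ ∘ N_i^n`, with
`N_{-1}^n = 0`, `N_0^0 = id` and `N_i^n = 0` for `i > n`. -/
def Nmap {A : Type*} [Ring A] (σ δ : A → A) : ℕ → ℕ → A → A
  | 0, 0 => id
  | 0, _ + 1 => fun _ => 0
  | n + 1, 0 => fun a => δ (Nmap σ δ n 0 a)
  | n + 1, i + 1 => fun a => σ (Nmap σ δ n i a) + δ (Nmap σ δ n (i + 1) a)

section aux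
variable {A : Type*} [Ring A] (σ : A →+* A) (δ : A →+ A)

lemma Nmap_big : ∀ n i a, n < i → Nmap (⇑σ) (⇑δ) n i a = 0 := by
  intro n
  induction n with
  | zero =>
    intro i a h
    match i, h with
    | i + 1, _ => rfl
  | succ n IH =>
    intro i a h
    match i, h with
    | i + 1, h =>
      show σ (Nmap _ _ n i a) + δ (Nmap _ _ n (i+1) a) = 0
      rw [IH i a (by omega), IH (i+1) a (by omega), map_zero, map_zero, add_zero]

lemma Nmap_zero_arg : ∀ n i, Nmap (⇑σ) (⇑δ) n i 0 = 0 := by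
  intro n
  induction n with
  | zero =>
    intro i
    match i with
    | 0 => rfl
    | i + 1 => rfl
  | succ n IH =>
    intro i
    match i with
    | 0 => show δ (Nmap _ _ n 0 0) = 0; rw [IH, map_zero]
    | i + 1 =>
      show σ (Nmap _ _ n i 0) + δ (Nmap _ _ n (i+1) 0) = 0
      rw [IH, IH, map_zero, map_zero, add_zero]

lemma Nmap_delta : ∀ n a, Nmap (⇑σ) (⇑δ) n 0 a = (⇑δ)^[n] a := by
  intro n
  induction n with
  | zero => intro a; rfl
  | succ n IH =>
    intro a
    show δ (Nmap _ _ n 0 a) = _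
    rw [IH, ← Function.iterate_succ_apply' δ]

lemma Nmap_nil (m : ℕ) (hnil : ∀ a : A, (⇑δ)^[m] a = 0) :
    ∀ i n a, (i + 1) * m ≤ n → Nmap (⇑σ) (⇑δ) n i a = 0 := by
  have hz : ∀ k : ℕ, (⇑δ)^[k] (0 : A) = 0 := by
    intro k
    induction k with
    | zero => rfl
    | succ k IHk => rw [Function.iterate_succ_apply' δ, IHk, map_zero]
  intro i
  induction i with
  | zero =>
    intro n a h
    rw [Nmap_delta]
    rw [zero_add, one_mul] at h
    obtain ⟨k, rfl⟩ := Nat.exists_eq_add_of_le h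
    rw [add_comm, Function.iterate_add_apply, hnil, hz]
  | succ i IH =>
    have sub : ∀ j n a, (i + 1) * m ≤ n →
        Nmap (⇑σ) (⇑δ) (n + j) (i + 1) a = (⇑δ)^[j] (Nmap (⇑σ) (⇑δ) n (i + 1) a) := by
      intro j
      induction j with
      | zero => intro n a h; rfl
      | succ j IHj =>
        intro n a h
        have h1 : Nmap (⇑σ) (⇑δ) (n + (j + 1)) (i + 1) a
            = σ (Nmap (⇑σ) (⇑δ) (n + j) i a) + δ (Nmap (⇑σ) (⇑δ) (n + j) (i + 1) a) := rfl
        rw [h1, IH (n + j) a (by omega), IHj n a h, map_zero, zero_add,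
          ← Function.iterate_succ_apply' δ]
    intro n a h
    rcases Nat.eq_zero_or_pos m with hm | hm
    · subst hm
      have : a = 0 := by simpa using hnil a
      rw [this, Nmap_zero_arg]
    · have hkey : (i + 1 + 1) * m = (i + 1) * m + m := by ring
      rw [hkey] at h
      obtain ⟨n0, hn0, hn0'⟩ : ∃ n0, n = n0 + m ∧ (i + 1) * m ≤ n0 :=
        ⟨n - m, by omega, by omega⟩
      rw [hn0, sub m n0 a hn0', hnil]

lemma shift_iter_s14 : ∀ (l : ℕ) (t : ℕ → A) (n : ℕ),
    (shiftS^[l] t) n = if l ≤ n then t (n - l) else 0 := by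
  intro l
  induction l with
  | zero => intro t n; simp
  | succ l IH =>
    intro t n
    rw [Function.iterate_succ_apply' shiftS]
    match n with
    | 0 => rfl
    | n + 1 =>
      show (shiftS^[l] t) n = _
      rw [IH]
      simp only [Nat.succ_sub_succ]
      congr 1
      simp [Nat.succ_le_succ_iff]

end aux

section aux2
variable {A : Type*} [Ring A] (σ : A →+* A) (δ : A →+ A)

lemma Cs_add (x y : A) : Cs (x + y) = Cs x + Cs y := by
  funext n; by_cases h : n = 0 <;> simp [Cs, h]

lemma Cs_zero : Cs (0 : A) = 0 := by funext n; simp [Cs]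

lemma Xpow_Cs {R : Type*} [Ring R] (φ : (ℕ → A) ≃+ R)
    (hX : ∀ x : A, φ e1 * φ (Cs x) = φ (Cs (σ x)) * φ e1 + φ (Cs (δ x))) :
    ∀ (j : ℕ) (x : A), φ e1 ^ j * φ (Cs x)
      = ∑ l ∈ Finset.range (j + 1), φ (Cs (Nmap (⇑σ) (⇑δ) j l x)) * φ e1 ^ l := by
  intro j
  induction j with
  | zero =>
    intro x
    simp [show Nmap (⇑σ) (⇑δ) 0 0 x = x from rfl]
  | succ j IH =>
    intro x
    have step : φ e1 ^ (j + 1) * φ (Cs x)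
        = ∑ l ∈ Finset.range (j + 1),
            (φ (Cs (σ (Nmap (⇑σ) (⇑δ) j l x))) * φ e1 ^ (l + 1)
              + φ (Cs (δ (Nmap (⇑σ) (⇑δ) j l x))) * φ e1 ^ l) := by
      rw [pow_succ', mul_assoc, IH, Finset.mul_sum]
      refine Finset.sum_congr rfl (fun l _ => ?_)
      rw [← mul_assoc, hX, add_mul, mul_assoc, ← pow_succ']
    rw [step]
    rw [Finset.sum_add_distrib]
    -- RHS: peel off the 0-th term
    have hrhs : ∑ l ∈ Finset.range (j + 1 + 1), φ (Cs (Nmap (⇑σ) (⇑δ) (j + 1) l x)) * φ e1 ^ l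
        = (∑ l ∈ Finset.range (j + 1), φ (Cs (Nmap (⇑σ) (⇑δ) (j + 1) (l + 1) x)) * φ e1 ^ (l + 1))
          + φ (Cs (Nmap (⇑σ) (⇑δ) (j + 1) 0 x)) * φ e1 ^ 0 :=
      Finset.sum_range_succ' _ _
    rw [hrhs]
    have hterm : ∀ l, Nmap (⇑σ) (⇑δ) (j + 1) (l + 1) x
        = σ (Nmap (⇑σ) (⇑δ) j l x) + δ (Nmap (⇑σ) (⇑δ) j (l + 1) x) := fun l => rfl
    have hsplit : ∑ l ∈ Finset.range (j + 1), φ (Cs (Nmap (⇑σ) (⇑δ) (j + 1) (l + 1) x)) * φ e1 ^ (l + 1)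
        = (∑ l ∈ Finset.range (j + 1), φ (Cs (σ (Nmap (⇑σ) (⇑δ) j l x))) * φ e1 ^ (l + 1))
          + ∑ l ∈ Finset.range (j + 1), φ (Cs (δ (Nmap (⇑σ) (⇑δ) j (l + 1) x))) * φ e1 ^ (l + 1) := by
      rw [← Finset.sum_add_distrib]
      refine Finset.sum_congr rfl (fun l _ => ?_)
      rw [hterm l, Cs_add, map_add, add_mul]
    rw [hsplit]
    have hzero : Nmap (⇑σ) (⇑δ) (j + 1) 0 x = δ (Nmap (⇑σ) (⇑δ) j 0 x) := rfl
    -- remaining: δ-sums agree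
    have hdelta : ∑ l ∈ Finset.range (j + 1), φ (Cs (δ (Nmap (⇑σ) (⇑δ) j l x))) * φ e1 ^ l
        = (∑ l ∈ Finset.range (j + 1), φ (Cs (δ (Nmap (⇑σ) (⇑δ) j (l + 1) x))) * φ e1 ^ (l + 1))
          + φ (Cs (Nmap (⇑σ) (⇑δ) (j + 1) 0 x)) * φ e1 ^ 0 := by
      rw [hzero]
      have htop : φ (Cs (δ (Nmap (⇑σ) (⇑δ) j (j + 1) x))) * φ e1 ^ (j + 1) = 0 := by
        rw [Nmap_big σ δ j (j + 1) x (by omega), map_zero, Cs_zero, map_zero, zero_mul]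
      have e1' := Finset.sum_range_succ
        (fun l => φ (Cs (δ (Nmap (⇑σ) (⇑δ) j l x))) * φ e1 ^ l) (j + 1)
      have e2' := Finset.sum_range_succ'
        (fun l => φ (Cs (δ (Nmap (⇑σ) (⇑δ) j l x))) * φ e1 ^ l) (j + 1)
      rw [← e2', e1', htop, add_zero]
    rw [hdelta, add_assoc]

end aux2

section aux3
variable {A : Type*} [Ring A]

lemma decompS {R : Type*} [Ring R] (φ : (ℕ → A) ≃+ R)
    (hshift : ∀ s : ℕ → A, φ s * φ e1 = φ (shiftS s)) :
    ∀ (i : ℕ) (s : ℕ → A),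
      φ s = (∑ j ∈ Finset.range i, φ (Cs (s j)) * φ e1 ^ j)
        + φ (fun k => s (k + i)) * φ e1 ^ i := by
  have hdec : ∀ t : ℕ → A, φ t = φ (Cs (t 0)) + φ (fun k => t (k + 1)) * φ e1 := by
    intro t
    rw [hshift, ← map_add]
    congr 1
    funext n
    match n with
    | 0 => simp [Cs, shiftS]
    | n + 1 => simp [Cs, shiftS]
  intro i
  induction i with
  | zero =>
    intro s
    have h1 : (fun k => s (k + 0)) = s := funext fun k => by rw [Nat.add_zero]
    simp [h1]
  | succ i IH =>
    intro s
    have h2 : φ (fun k => s (k + i)) = φ (Cs (s i)) + φ (fun k => s (k + (i + 1))) * φ e1 := by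
      have h3 := hdec (fun k => s (k + i))
      simp only [Nat.zero_add] at h3
      have h4 : (fun k => s (k + (i + 1))) = fun k => s (k + 1 + i) :=
        funext fun k => by ring_nf
      rw [h4]; exact h3
    rw [IH s, h2, add_mul, mul_assoc, ← pow_succ', ← add_assoc, ← Finset.sum_range_succ]

end aux3

/-- Let `(σ, δ)` be a left skew derivation on `A` with `δ` nilpotent, say
`δ^m = 0`.  Then in the skew power series ring `A⟦X;σ,δ⟧` (modeled by a ring
`R` additively identified via `φ` with `ℕ → A`, with reasonable compatible
product), for every series `s = Σ sᵢXⁱ` and every `a ∈ A`: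
`s·a = Σ_{i=0}^{∞} ( Σ_{j=i}^{(i+1)m-1} sⱼ·N_i^j(a) )·Xⁱ`. -/
theorem stmt14 {A R : Type*} [Ring A] [Ring R]
    (σ : A →+* A) (δ : A →+ A)
    (hleib : ∀ a b : A, δ (a * b) = σ a * δ b + δ a * b)
    (m : ℕ) (hnil : ∀ a : A, (⇑δ)^[m] a = 0)
    (φ : (ℕ → A) ≃+ R)
    (hA : ∀ a b : A, φ (Cs a) * φ (Cs b) = φ (Cs (a * b)))
    (hone : φ (Cs (1 : A)) = 1)
    (hmod : ∀ (a : A) (s : ℕ → A), φ (Cs a) * φ s = φ (fun n => a * s n))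
    (hshift : ∀ s : ℕ → A, φ s * φ e1 = φ (shiftS s))
    (hcompat : ∀ s : ℕ → A,
      φ e1 * φ s = φ (fun n => σ (s n)) * φ e1 + φ (fun n => δ (s n))) :
    ∀ (s : ℕ → A) (a : A),
      φ s * φ (Cs a) =
        φ (fun i => ∑ j ∈ Finset.Icc i ((i + 1) * m - 1), s j * Nmap (⇑σ) (⇑δ) j i a) := by
  intro s a
  rcases Nat.eq_zero_or_pos m with hm | hm
  · subst hm
    have h0 : ∀ x : A, x = 0 := by simpa using hnil
    have hs : s = (0 : ℕ → A) := funext fun n => h0 _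
    have hT : (fun i => ∑ j ∈ Finset.Icc i ((i + 1) * 0 - 1), s j * Nmap (⇑σ) (⇑δ) j i a)
        = (0 : ℕ → A) := funext fun i => h0 _
    rw [hT, hs]; simp
  · have hX : ∀ x : A, φ e1 * φ (Cs x) = φ (Cs (σ x)) * φ e1 + φ (Cs (δ x)) := by
      intro x
      have h1 : (fun n => σ (Cs x n)) = Cs (σ x) := by
        funext n; by_cases h : n = 0 <;> simp [Cs, h]
      have h2 : (fun n => δ (Cs x n)) = Cs (δ x) := by
        funext n; by_cases h : n = 0 <;> simp [Cs, h]
      rw [hcompat (Cs x), h1, h2]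
    have pow_shift : ∀ (l : ℕ) (t : ℕ → A), φ t * φ e1 ^ l = φ (shiftS^[l] t) := by
      intro l
      induction l with
      | zero => intro t; simp
      | succ l IH =>
        intro t
        rw [pow_succ, ← mul_assoc, IH, hshift, ← Function.iterate_succ_apply' shiftS]
    have key : ∀ n : ℕ, (φ.symm (φ s * φ (Cs a))) n
        = ∑ j ∈ Finset.Icc n ((n + 1) * m - 1), s j * Nmap (⇑σ) (⇑δ) j n a := by
      intro n
      set i := (n + 1) * m with hi
      have hi1 : 0 < i := Nat.mul_pos (by omega) hm
      have exp : φ s * φ (Cs a)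
          = (∑ j ∈ Finset.range i, ∑ l ∈ Finset.range (j + 1),
              φ (shiftS^[l] (Cs (s j * Nmap (⇑σ) (⇑δ) j l a))))
            + ∑ l ∈ Finset.range (i + 1),
              φ (shiftS^[l] (φ.symm (φ (fun k => s (k + i)) * φ (Cs (Nmap (⇑σ) (⇑δ) i l a))))) := by
        rw [decompS φ hshift i s, add_mul, Finset.sum_mul]
        congr 1
        · refine Finset.sum_congr rfl (fun j _ => ?_)
          rw [mul_assoc, Xpow_Cs σ δ φ hX, Finset.mul_sum]
          refine Finset.sum_congr rfl (fun l _ => ?_)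
          rw [← mul_assoc, hA, pow_shift]
        · rw [mul_assoc, Xpow_Cs σ δ φ hX, Finset.mul_sum]
          refine Finset.sum_congr rfl (fun l _ => ?_)
          have hu : φ (fun k => s (k + i)) * φ (Cs (Nmap (⇑σ) (⇑δ) i l a))
              = φ (φ.symm (φ (fun k => s (k + i)) * φ (Cs (Nmap (⇑σ) (⇑δ) i l a)))) :=
            (φ.apply_symm_apply _).symm
          rw [← mul_assoc]
          conv_lhs => rw [hu]
          rw [pow_shift]
      have hsymm := congrArg (⇑φ.symm) exp
      simp only [map_add, map_sum, AddEquiv.symm_apply_apply] at hsymm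
      rw [hsymm]
      simp only [Pi.add_apply, Finset.sum_apply]
      have htail : ∀ l ∈ Finset.range (i + 1),
          (shiftS^[l] (φ.symm (φ (fun k => s (k + i)) * φ (Cs (Nmap (⇑σ) (⇑δ) i l a))))) n
            = 0 := by
        intro l _
        rw [shift_iter_s14]
        by_cases hl : l ≤ n
        · rw [if_pos hl]
          have hz : Nmap (⇑σ) (⇑δ) i l a = 0 :=
            Nmap_nil σ δ m hnil l i a (by rw [hi]; exact Nat.mul_le_mul_right m (by omega))
          rw [hz, Cs_zero, map_zero, mul_zero, map_zero]
          rfl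
        · rw [if_neg hl]
      have hhead : ∀ j,
          (∑ l ∈ Finset.range (j + 1), (shiftS^[l] (Cs (s j * Nmap (⇑σ) (⇑δ) j l a))) n)
            = if n ≤ j then s j * Nmap (⇑σ) (⇑δ) j n a else 0 := by
        intro j
        have hterm : ∀ l, (shiftS^[l] (Cs (s j * Nmap (⇑σ) (⇑δ) j l a))) n
            = if l = n then s j * Nmap (⇑σ) (⇑δ) j l a else 0 := by
          intro l
          rw [shift_iter_s14]
          rcases Nat.lt_trichotomy l n with h | h | h
          · rw [if_pos (le_of_lt h), if_neg (by omega)]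
            have : n - l ≠ 0 := by omega
            simp [Cs, this]
          · subst h; simp [Cs]
          · rw [if_neg (by omega), if_neg (by omega)]
        simp only [hterm]
        rw [Finset.sum_ite_eq' (Finset.range (j + 1)) n
          (fun l => s j * Nmap (⇑σ) (⇑δ) j l a)]
        simp [Nat.lt_succ_iff]
      rw [Finset.sum_eq_zero htail, add_zero]
      rw [Finset.sum_congr rfl (fun j _ => hhead j), ← Finset.sum_filter]
      congr 1
      ext j
      simp only [Finset.mem_filter, Finset.mem_range, Finset.mem_Icc]
      omega
    calc φ s * φ (Cs a) = φ (φ.symm (φ s * φ (Cs a))) := (φ.apply_symm_apply _).symm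
      _ = _ := by rw [funext key]
end

section
/- Let A = 𝔽[Y,Z]/(Y², Z², YZ) with y, z the images of Y, Z; let σ be the 𝔽-algebra automorphism with σ(y) = y+z, σ(z) = z, and δ the 𝔽-linear map with δ(1) = 0, δ(y) = 0, δ(z) = y. Then δ is a σ-derivation with δ² = 0, but δ' = -δσ^{-1} satisfies δ'(y) = y, hence δ' is not nilpotent. -/
set_option synthInstance.maxHeartbeats 400000
set_option maxHeartbeats 800000


open MvPolynomial in
/-- The algebra `A = 𝔽[Y,Z]/(Y², Z², YZ)`. -/
abbrev Aq (F : Type*) [Field F] : Type _ :=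
  MvPolynomial (Fin 2) F ⧸
    Ideal.span ({(X 0) ^ 2, (X 1) ^ 2, X 0 * X 1} : Set (MvPolynomial (Fin 2) F))

/-- The image `y` of `Y` in `A`. -/
noncomputable def yA (F : Type*) [Field F] : Aq F :=
  Ideal.Quotient.mk _ (MvPolynomial.X 0)

/-- The image `z` of `Z` in `A`. -/
noncomputable def zA (F : Type*) [Field F] : Aq F :=
  Ideal.Quotient.mk _ (MvPolynomial.X 1)

open MvPolynomial

lemma yy (F : Type*) [Field F] : yA F * yA F = 0 := by
  rw [yA, ← map_mul, Ideal.Quotient.eq_zero_iff_mem]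
  exact Ideal.subset_span (by simp [sq])

lemma zz (F : Type*) [Field F] : zA F * zA F = 0 := by
  rw [zA, ← map_mul, Ideal.Quotient.eq_zero_iff_mem]
  exact Ideal.subset_span (by simp [sq])

lemma yz (F : Type*) [Field F] : yA F * zA F = 0 := by
  rw [yA, zA, ← map_mul, Ideal.Quotient.eq_zero_iff_mem]
  exact Ideal.subset_span (by simp)

lemma zy (F : Type*) [Field F] : zA F * yA F = 0 := by
  rw [mul_comm]; exact yz F

lemma span3 (F : Type*) [Field F] (a : Aq F) :
    ∃ c d e : F, a = algebraMap F (Aq F) c + d • yA F + e • zA F := by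
  obtain ⟨p, rfl⟩ := Ideal.Quotient.mk_surjective a
  induction p using MvPolynomial.induction_on with
  | C c =>
      refine ⟨c, 0, 0, ?_⟩
      rw [IsScalarTower.algebraMap_apply F (MvPolynomial (Fin 2) F) (Aq F),
        ← MvPolynomial.algebraMap_eq, Ideal.Quotient.algebraMap_eq]
      simp
  | add p q hp hq =>
      obtain ⟨c, d, e, hp⟩ := hp
      obtain ⟨c', d', e', hq⟩ := hq
      refine ⟨c + c', d + d', e + e', ?_⟩
      rw [map_add, hp, hq, map_add, add_smul, add_smul]
      abel
  | mul_X p i hp =>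
      obtain ⟨c, d, e, hp⟩ := hp
      fin_cases i
      · refine ⟨0, c, 0, ?_⟩
        rw [map_mul, hp]
        show _ * yA F = _
        rw [add_mul, add_mul, smul_mul_assoc, smul_mul_assoc, yy, zy, Algebra.algebraMap_eq_smul_one]
        simp [smul_mul_assoc]
      · refine ⟨0, 0, c, ?_⟩
        rw [map_mul, hp]
        show _ * zA F = _
        rw [add_mul, add_mul, smul_mul_assoc, smul_mul_assoc, yz, zz, Algebra.algebraMap_eq_smul_one]
        simp [smul_mul_assoc]

lemma yne (F : Type*) [Field F] : yA F ≠ 0 := by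
  intro h
  rw [yA, Ideal.Quotient.eq_zero_iff_mem] at h
  have hle : Ideal.span ({(X 0) ^ 2, (X 1) ^ 2, X 0 * X 1} : Set (MvPolynomial (Fin 2) F)) ≤
      RingHom.ker (aeval ![DualNumber.eps, 0] : MvPolynomial (Fin 2) F →ₐ[F] DualNumber F) := by
    rw [Ideal.span_le]
    rintro x (rfl | rfl | rfl) <;>
      simp [RingHom.mem_ker, sq, DualNumber.eps_mul_eps]
  have := hle h
  simp [RingHom.mem_ker] at this
  exact one_ne_zero (by simpa only [DualNumber.eps, TrivSqZeroExt.snd_inr, TrivSqZeroExt.snd_zero] using congrArg TrivSqZeroExt.snd this)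

/-- Let `A = 𝔽[Y,Z]/(Y², Z², YZ)` with `y, z` the images of `Y, Z`; let `σ` be
the `𝔽`-algebra automorphism with `σ(y) = y + z`, `σ(z) = z` (with inverse
`σinv`), and `δ` the `𝔽`-linear map with `δ(1) = 0`, `δ(y) = 0`, `δ(z) = y`.
Then `δ` is a `σ`-derivation with `δ² = 0`, but `δ' = -δσ⁻¹` satisfies
`δ'(y) = y`, hence `δ'` is not nilpotent. -/
theorem stmt17 (F : Type*) [Field F]
    (σ : Aq F →ₐ[F] Aq F) (hσy : σ (yA F) = yA F + zA F) (hσz : σ (zA F) = zA F)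
    (σinv : Aq F → Aq F)
    (hinv1 : Function.LeftInverse σinv ⇑σ) (hinv2 : Function.RightInverse σinv ⇑σ)
    (δ : Aq F →ₗ[F] Aq F) (hδ1 : δ 1 = 0) (hδy : δ (yA F) = 0) (hδz : δ (zA F) = yA F) :
    (∀ a b : Aq F, δ (a * b) = σ a * δ b + δ a * b) ∧
    (∀ a : Aq F, δ (δ a) = 0) ∧
    (-δ (σinv (yA F)) = yA F) ∧
    ¬ ∃ m : ℕ, ∀ a : Aq F, (fun b => -δ (σinv b))^[m] a = 0 := by
  have hσ1 : σ 1 = 1 := map_one σ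
  have key3 : σinv (yA F) = yA F - zA F := by
    have h1 : σ (yA F - zA F) = yA F := by rw [map_sub, hσy, hσz]; ring
    have h2 := hinv1 (yA F - zA F)
    rwa [h1] at h2
  have part3 : -δ (σinv (yA F)) = yA F := by
    rw [key3, map_sub, hδy, hδz]; ring
  refine ⟨?_, ?_, part3, ?_⟩
  · intro a b
    obtain ⟨c, d, e, rfl⟩ := span3 F a
    obtain ⟨c', d', e', rfl⟩ := span3 F b
    simp only [Algebra.algebraMap_eq_smul_one]
    simp only [add_mul, mul_add, smul_mul_assoc, mul_smul_comm, yy F, zz F, yz F, zy F,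
      one_mul, mul_one, smul_zero, add_zero, zero_add, smul_smul]
    simp only [map_add, map_smul, hδ1, hδy, hδz, hσ1, hσy, hσz, smul_zero, add_zero, zero_add]
    simp only [add_mul, mul_add, smul_mul_assoc, mul_smul_comm, yy F, zz F, yz F, zy F,
      one_mul, mul_one, smul_zero, add_zero, zero_add, smul_smul]
    module
  · intro a
    obtain ⟨c, d, e, rfl⟩ := span3 F a
    simp only [Algebra.algebraMap_eq_smul_one, map_add, map_smul, hδ1, hδy, hδz,
      smul_zero, add_zero, zero_add]
  · rintro ⟨m, hm⟩
    have hfix : (fun b => -δ (σinv b)) (yA F) = yA F := part3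
    have := Function.iterate_fixed (f := fun b => -δ (σinv b)) hfix m
    rw [hm (yA F)] at this
    exact yne F this.symm
end

section
/- Let 𝔽 be a field and let V = 𝔽^n((X)) be the finite-dimensional 𝔽((X))-vector space of Laurent series. If W is an 𝔽((X))-vector subspace of V, then W ∩ 𝔽^n[X] is an 𝔽[X]-direct summand of 𝔽^n[X]; moreover W has a basis of polynomial vectors (i.e., W is a convolutional code) if and only if W equals the 𝔽((X))-span of W ∩ 𝔽^n[X]. -/
/-- The `𝔽[X]`-linear embedding of polynomial vectors into `𝔽ⁿ⸨X⸩`. -/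
noncomputable def embV (F : Type*) [Field F] (n : ℕ) :
    (Fin n → Polynomial F) →ₗ[Polynomial F] (Fin n → LaurentSeries F) :=
  LinearMap.pi fun i =>
    (Algebra.linearMap (Polynomial F) (LaurentSeries F)).comp (LinearMap.proj i)

/-- The `𝔽[X]`-submodule `𝔽ⁿ[X]` of polynomial vectors inside `𝔽ⁿ⸨X⸩`. -/
noncomputable def polyVec (F : Type*) [Field F] (n : ℕ) :
    Submodule (Polynomial F) (Fin n → LaurentSeries F) :=
  LinearMap.range (embV F n)

/-- Let `𝔽` be a field and let `W` be an `𝔽⸨X⸩`-vector subspace of the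
finite-dimensional Laurent series space `𝔽ⁿ⸨X⸩`.  Then `W ∩ 𝔽ⁿ[X]` is an
`𝔽[X]`-direct summand of `𝔽ⁿ[X]`; moreover `W` has a basis of polynomial
vectors (i.e. `W` is a convolutional code) if and only if `W` equals the
`𝔽⸨X⸩`-span of `W ∩ 𝔽ⁿ[X]`. -/
theorem stmt18 (F : Type*) [Field F] (n : ℕ)
    (W : Submodule (LaurentSeries F) (Fin n → LaurentSeries F)) :
    (∃ C : Submodule (Polynomial F) (Fin n → LaurentSeries F), C ≤ polyVec F n ∧
        (W.restrictScalars (Polynomial F) ⊓ polyVec F n) ⊓ C = ⊥ ∧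
        (W.restrictScalars (Polynomial F) ⊓ polyVec F n) ⊔ C = polyVec F n) ∧
    ((∃ B : Set (Fin n → LaurentSeries F), B ⊆ (polyVec F n : Set (Fin n → LaurentSeries F)) ∧
        LinearIndependent (LaurentSeries F) ((↑) : B → (Fin n → LaurentSeries F)) ∧
        Submodule.span (LaurentSeries F) B = W) ↔
      W = Submodule.span (LaurentSeries F)
        ((W : Set (Fin n → LaurentSeries F)) ∩ (polyVec F n : Set (Fin n → LaurentSeries F)))) := by
  classical
  have halg : Function.Injective (algebraMap (Polynomial F) (LaurentSeries F)) :=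
    Polynomial.algebraMap_hahnSeries_injective ℤ
  have hinj : Function.Injective (embV F n) := by
    intro x y h
    funext i
    exact halg (congrFun h i)
  constructor
  · -- direct summand part
    set e := embV F n with he
    set S₀ : Submodule (Polynomial F) (Fin n → Polynomial F) :=
      (W.restrictScalars (Polynomial F)).comap e with hS₀
    have hmapS : S₀.map e = W.restrictScalars (Polynomial F) ⊓ polyVec F n := by
      rw [hS₀, Submodule.map_comap_eq, polyVec, inf_comm]
    have htf : NoZeroSMulDivisors (Polynomial F) ((Fin n → Polynomial F) ⧸ S₀) := by
      constructor
      intro p x h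
      by_contra hcon
      push_neg at hcon
      obtain ⟨hp, hx⟩ := hcon
      obtain ⟨m, rfl⟩ := Submodule.Quotient.mk_surjective S₀ x
      apply hx
      rw [Submodule.Quotient.mk_eq_zero]
      rw [← Submodule.Quotient.mk_smul, Submodule.Quotient.mk_eq_zero] at h
      have hW : p • e m ∈ W := by
        have := h
        rw [hS₀, Submodule.mem_comap] at this
        simpa using (map_smul e p m) ▸ this
      have hc : (algebraMap (Polynomial F) (LaurentSeries F) p) ≠ 0 := by
        intro hc0
        exact hp (halg (by simpa using hc0))
      have hW' : e m ∈ W := by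
        have h2 : (algebraMap (Polynomial F) (LaurentSeries F) p) • e m ∈ W := by
          rwa [algebraMap_smul]
        have := W.smul_mem (algebraMap (Polynomial F) (LaurentSeries F) p)⁻¹ h2
        rwa [inv_smul_smul₀ hc] at this
      rw [hS₀, Submodule.mem_comap]
      exact hW'
    have : Module.Free (Polynomial F) ((Fin n → Polynomial F) ⧸ S₀) :=
      Module.free_of_finite_type_torsion_free'
    obtain ⟨s, hs⟩ := Module.projective_lifting_property S₀.mkQ LinearMap.id
      S₀.mkQ_surjective
    set C₀ : Submodule (Polynomial F) (Fin n → Polynomial F) := LinearMap.range s with hC₀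
    have hinf : S₀ ⊓ C₀ = ⊥ := by
      rw [eq_bot_iff]
      rintro x ⟨hx1, hx2⟩
      obtain ⟨y, rfl⟩ := hx2
      have hy : S₀.mkQ (s y) = y := by
        have := congrFun (congrArg DFunLike.coe hs) y
        simpa using this
      have : y = 0 := by
        rw [← hy, Submodule.mkQ_apply, Submodule.Quotient.mk_eq_zero]
        exact hx1
      simp [this]
    have hsup : S₀ ⊔ C₀ = ⊤ := by
      rw [eq_top_iff]
      intro x _
      have h1 : x - s (S₀.mkQ x) ∈ S₀ := by
        rw [← Submodule.Quotient.mk_eq_zero]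
        have hy : S₀.mkQ (s (S₀.mkQ x)) = S₀.mkQ x := by
          have := congrFun (congrArg DFunLike.coe hs) (S₀.mkQ x)
          simpa using this
        have : S₀.mkQ (x - s (S₀.mkQ x)) = 0 := by
          rw [map_sub, hy, sub_self]
        simpa using this
      have : x = (x - s (S₀.mkQ x)) + s (S₀.mkQ x) := by abel
      rw [this]
      exact Submodule.add_mem_sup h1 (LinearMap.mem_range_self s (S₀.mkQ x))
    refine ⟨C₀.map e, ?_, ?_, ?_⟩
    · rintro y ⟨x, -, rfl⟩
      exact ⟨x, rfl⟩
    · rw [← hmapS, ← Submodule.map_inf _ hinj, hinf, Submodule.map_bot]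
    · rw [← hmapS, ← Submodule.map_sup, hsup, Submodule.map_top, polyVec]
  · constructor
    · rintro ⟨B, hBpoly, -, rfl⟩
      apply le_antisymm
      · apply Submodule.span_mono
        intro b hb
        exact ⟨Submodule.subset_span hb, hBpoly hb⟩
      · rw [Submodule.span_le]
        intro x hx
        exact hx.1
    · intro h
      obtain ⟨b, hb1, hb2, hb3⟩ := exists_linearIndependent (LaurentSeries F)
        ((W : Set (Fin n → LaurentSeries F)) ∩ (polyVec F n : Set (Fin n → LaurentSeries F)))
      exact ⟨b, fun x hx => (hb1 hx).2, hb3, by rw [hb2, ← h]⟩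
end

section
/- Let 𝔽 be a field and B ⊆ 𝔽^n[X]. Then the smallest 𝔽[X]-direct summand of 𝔽^n[X] containing B equals B* ∩ 𝔽^n[X], where B* denotes the 𝔽((X))-span of B in 𝔽^n((X)). Moreover the rank of the 𝔽[X]-module generated by B equals the 𝔽((X))-dimension of B*. -/
/-- `D` is an `𝔽[X]`-direct summand of `𝔽ⁿ[X]`. -/
def IsSummand (F : Type*) [Field F] (n : ℕ)
    (D : Submodule (Polynomial F) (Fin n → LaurentSeries F)) : Prop :=
  D ≤ polyVec F n ∧ ∃ C : Submodule (Polynomial F) (Fin n → LaurentSeries F),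
    C ≤ polyVec F n ∧ D ⊓ C = ⊥ ∧ D ⊔ C = polyVec F n

open Polynomial Submodule
open scoped LaurentSeries

theorem Submodule.exists_isCompl_of_projective_quotient {R M : Type*} [Ring R]
    [AddCommGroup M] [Module R M] (N : Submodule R M) [Module.Projective R (M ⧸ N)] : ∃ C : Submodule R M, IsCompl N C := by
  obtain ⟨s, hs⟩ := N.mkQ.exists_rightInverse_of_surjective N.range_mkQ
  have hidem : IsIdempotentElem (s ∘ₗ N.mkQ) := by
    rw [IsIdempotentElem, Module.End.mul_eq_comp, LinearMap.comp_assoc,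
      ← LinearMap.comp_assoc N.mkQ, hs, LinearMap.id_comp]
  have hker : LinearMap.ker (s ∘ₗ N.mkQ) = N := by
    rw [LinearMap.ker_comp, LinearMap.ker_eq_bot_of_inverse hs, ← LinearMap.ker, N.ker_mkQ]
  exact ⟨_, hker ▸ (LinearMap.IsIdempotentElem.isCompl hidem).symm⟩

section Tower

variable {R L V : Type*} [CommRing R] [Field L] [Algebra R L] [FaithfulSMul R L]
  [AddCommGroup V] [Module L V] [Module R V] [IsScalarTower R L V]

theorem Submodule.smul_of_tower_mem_iff (W : Submodule L V) {a : R} (ha : a ≠ 0) {x : V} :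
    a • x ∈ W ↔ x ∈ W := by
  rw [← algebraMap_smul L a x]
  exact W.smul_mem_iff ((map_ne_zero_iff _ (FaithfulSMul.algebraMap_injective R L)).mpr ha)

theorem Submodule.isTorsionFree_quotient_comap_restrictScalars [Nontrivial R]
    {P : Type*} [AddCommGroup P] [Module R P] (g : P →ₗ[R] V) (W : Submodule L V) :
    Module.IsTorsionFree R (P ⧸ (W.restrictScalars R).comap g) := by
  refine .of_smul_eq_zero fun a y hy => ?_
  induction y using Submodule.Quotient.induction_on with | _ p => ?_
  rw [← Submodule.Quotient.mk_smul, Submodule.Quotient.mk_eq_zero] at hy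
  rw [Submodule.Quotient.mk_eq_zero]
  by_cases ha : a = 0
  · exact .inl ha
  · refine .inr ((W.smul_of_tower_mem_iff ha).mp ?_)
    simpa using hy

end Tower

section PolyVec

variable {F : Type*} [Field F] {n : ℕ}

theorem embV_injective : Function.Injective (embV F n) := fun _ _ h =>
  funext fun i => FaithfulSMul.algebraMap_injective F[X] F⸨X⸩ (congrFun h i)

theorem embV_apply (p : Fin n → F[X]) : embV F n p = algebraMap F[X] F⸨X⸩ ∘ p := rfl

theorem linearIndependent_laurentSeries_iff {ι : Type*} {u : ι → Fin n → F⸨X⸩}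
    (hu : ∀ i, u i ∈ polyVec F n) :
    LinearIndependent F⸨X⸩ u ↔ LinearIndependent F[X] u := by
  choose v hv using hu
  obtain rfl : embV F n ∘ v = u := funext hv
  rw [(embV F n).linearIndependent_iff (LinearMap.ker_eq_bot.mpr embV_injective)]
  simp only [Function.comp_def, embV_apply]
  exact linearIndependent_algebraMap_comp_iff

noncomputable def polyVecBasis (F : Type*) [Field F] (n : ℕ) :
    Module.Basis (Fin n) F[X] (polyVec F n) :=
  (Pi.basisFun F[X] (Fin n)).map (LinearEquiv.ofInjective (embV F n) embV_injective)

theorem exists_linearIndependent_span_eq {N : Submodule F[X] (Fin n → F⸨X⸩)}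
    (hN : N ≤ polyVec F n) :
    ∃ (k : ℕ) (u : Fin k → Fin n → F⸨X⸩),
      LinearIndependent F[X] u ∧ span F[X] (Set.range u) = N := by
  obtain ⟨k, b⟩ := basisOfPidOfLE hN (polyVecBasis F n)
  refine ⟨k, N.subtype ∘ b, b.linearIndependent.map' N.subtype N.ker_subtype, ?_⟩
  rw [Set.range_comp, ← map_span, b.span_eq, map_subtype_top]

theorem exists_smul_mem_of_mem_span_laurentSeries {N : Submodule F[X] (Fin n → F⸨X⸩)}
    (hN : N ≤ polyVec F n) {x : Fin n → F⸨X⸩} (hx : x ∈ polyVec F n)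
    (hxN : x ∈ span F⸨X⸩ (N : Set (Fin n → F⸨X⸩))) : ∃ a : F[X], a ≠ 0 ∧ a • x ∈ N := by
  obtain ⟨k, u, hu, rfl⟩ := exists_linearIndependent_span_eq hN
  by_contra! hsat
  have hcons : LinearIndependent F[X] (Fin.cons x u : Fin (k + 1) → _) :=
    hu.finCons' x u fun a y hy hxy => by
      by_contra ha
      exact hsat a ha (eq_neg_of_add_eq_zero_left hxy ▸ neg_mem hy)
  have hconsL := (linearIndependent_laurentSeries_iff
    (Fin.cases hx fun i => hN (subset_span ⟨i, rfl⟩))).mpr hcons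
  rw [span_span_of_tower] at hxN
  exact (linearIndependent_finCons.mp hconsL).2 hxN

theorem isSummand_map_embV {N C : Submodule F[X] (Fin n → F[X])} (h : IsCompl N C) :
    IsSummand F n (N.map (embV F n)) := by
  refine ⟨LinearMap.map_le_range, C.map (embV F n), LinearMap.map_le_range, ?_, ?_⟩
  · rw [← Submodule.map_inf _ embV_injective, h.inf_eq_bot, Submodule.map_bot]
  · rw [← Submodule.map_sup, h.sup_eq_top, Submodule.map_top]
    rfl

theorem isSummand_restrictScalars_inf_polyVec (W : Submodule F⸨X⸩ (Fin n → F⸨X⸩)) :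
    IsSummand F n (W.restrictScalars F[X] ⊓ polyVec F n) := by
  have := W.isTorsionFree_quotient_comap_restrictScalars (embV F n)
  obtain ⟨C, hC⟩ :=
    ((W.restrictScalars F[X]).comap (embV F n)).exists_isCompl_of_projective_quotient
  rw [inf_comm, polyVec, ← map_comap_eq]
  exact isSummand_map_embV hC

theorem restrictScalars_span_inf_polyVec_le {B : Set (Fin n → F⸨X⸩)}
    {D : Submodule F[X] (Fin n → F⸨X⸩)} (hD : IsSummand F n D) (hBD : B ⊆ D) :
    (span F⸨X⸩ B).restrictScalars F[X] ⊓ polyVec F n ≤ D := by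
  obtain ⟨hDP, C, hCP, hDC, hDCP⟩ := hD
  rintro x ⟨hxB, hxP⟩
  rw [← hDCP] at hxP
  obtain ⟨d, hd, c, hc, rfl⟩ := mem_sup.mp hxP
  have hcD : c ∈ span F⸨X⸩ (D : Set (Fin n → F⸨X⸩)) := by
    rw [show c = d + c - d by abel]
    exact sub_mem (span_mono hBD hxB) (subset_span hd)
  obtain ⟨a, ha, hacD⟩ := exists_smul_mem_of_mem_span_laurentSeries hDP (hCP hc) hcD
  have hac : a • c ∈ (⊥ : Submodule F⸨X⸩ (Fin n → F⸨X⸩)) := by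
    rw [mem_bot, ← mem_bot F[X], ← hDC]
    exact ⟨hacD, C.smul_mem a hc⟩
  rw [(smul_of_tower_mem_iff ⊥ ha).mp hac, add_zero]
  exact hd

theorem rank_span_eq_rank_span_laurentSeries {B : Set (Fin n → F⸨X⸩)}
    (hB : B ⊆ polyVec F n) :
    Module.rank F[X] (span F[X] B) = Module.rank F⸨X⸩ (span F⸨X⸩ B) := by
  obtain ⟨k, u, hu, hspan⟩ := exists_linearIndependent_span_eq (span_le.mpr hB)
  have huL : LinearIndependent F⸨X⸩ u := (linearIndependent_laurentSeries_iff fun i =>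
    span_le.mpr hB (hspan ▸ subset_span ⟨i, rfl⟩)).mpr hu
  rw [← span_span_of_tower F[X] F⸨X⸩ B, ← hspan, span_span_of_tower, rank_span hu,
    rank_span huL]

end PolyVec

/-- Let `𝔽` be a field and `B ⊆ 𝔽ⁿ[X]`.  Then the smallest `𝔽[X]`-direct
summand of `𝔽ⁿ[X]` containing `B` equals `B* ∩ 𝔽ⁿ[X]`, where `B*` denotes the
`𝔽⸨X⸩`-span of `B` in `𝔽ⁿ⸨X⸩`: namely, `B* ∩ 𝔽ⁿ[X]` is a direct summand
containing `B`, and is contained in every direct summand containing `B`.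
Moreover the rank of the `𝔽[X]`-module generated by `B` equals the
`𝔽⸨X⸩`-dimension of `B*`. -/
theorem stmt19 (F : Type*) [Field F] (n : ℕ) (B : Set (Fin n → LaurentSeries F))
    (hB : B ⊆ (polyVec F n : Set (Fin n → LaurentSeries F))) :
    (B ⊆ ((Submodule.span (LaurentSeries F) B).restrictScalars (Polynomial F) ⊓ polyVec F n :
        Set (Fin n → LaurentSeries F))) ∧
    IsSummand F n
      ((Submodule.span (LaurentSeries F) B).restrictScalars (Polynomial F) ⊓ polyVec F n) ∧
    (∀ D : Submodule (Polynomial F) (Fin n → LaurentSeries F),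
      IsSummand F n D → B ⊆ (D : Set (Fin n → LaurentSeries F)) →
      (Submodule.span (LaurentSeries F) B).restrictScalars (Polynomial F) ⊓ polyVec F n ≤ D) ∧
    Module.rank (Polynomial F) ↥(Submodule.span (Polynomial F) B) =
      Module.rank (LaurentSeries F) ↥(Submodule.span (LaurentSeries F) B) :=
  ⟨fun _ hb => ⟨subset_span hb, hB hb⟩, isSummand_restrictScalars_inf_polyVec _,
    fun _ hD hBD => restrictScalars_span_inf_polyVec_le hD hBD,
    rank_span_eq_rank_span_laurentSeries hB⟩
end
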